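/- arXiv:2605.25080 — 6 statements merged into one kernel-verified Lean document; each statement's English description precedes it below -/
import Mathlib

section
/- The orbit of (0,0) under the group of affine transformations of ℤ² generated by α(x,y) = (x+2y, y+1) and β(x,y) = (x+1, 2x+y) contains every point P_n = (n, 1-n) for all n ∈ ℤ. -/
/-!
For every `k`, the element `α ^ (-(2k + 1)) * β` of the group carries `P_k` to `P_(k+1)`, so the
whole line `{P_n}` lies in a single orbit; that orbit is the orbit of `(0,0)` because
`α (0,0) = (0,1) = P_0`.
-/

/-- The invertible affine map `α(x,y) = (x+2y, y+1)` of `ℤ²`. -/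
def alphaPerm : Equiv.Perm (ℤ × ℤ) where
  toFun p := (p.1 + 2 * p.2, p.2 + 1)
  invFun p := (p.1 - 2 * (p.2 - 1), p.2 - 1)
  left_inv := fun ⟨x, y⟩ => by simp only [Prod.mk.injEq]; constructor <;> ring
  right_inv := fun ⟨x, y⟩ => by simp only [Prod.mk.injEq]; constructor <;> ring

/-- The invertible affine map `β(x,y) = (x+1, 2x+y)` of `ℤ²`. -/
def betaPerm : Equiv.Perm (ℤ × ℤ) where
  toFun p := (p.1 + 1, 2 * p.1 + p.2)
  invFun p := (p.1 - 1, p.2 - 2 * (p.1 - 1))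
  left_inv := fun ⟨x, y⟩ => by simp only [Prod.mk.injEq]; constructor <;> ring
  right_inv := fun ⟨x, y⟩ => by simp only [Prod.mk.injEq]; constructor <;> ring

theorem MulAction.orbit_eq_orbit_zero_of_forall_exists_smul_eq_succ {G α : Type*} [Group G]
    [MulAction G α] (H : Subgroup G) (f : ℤ → α) (hf : ∀ k, ∃ g ∈ H, g • f k = f (k + 1))
    (n : ℤ) : MulAction.orbit H (f n) = MulAction.orbit H (f 0) := by
  have step (k : ℤ) : MulAction.orbit H (f (k + 1)) = MulAction.orbit H (f k) := by
    obtain ⟨g, hg, hgk⟩ := hf k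
    rw [← hgk]
    exact MulAction.orbit_smul (⟨g, hg⟩ : H) (f k)
  induction n using Int.induction_on with
  | zero => rfl
  | succ k ih => rw [step, ih]
  | pred k ih => rw [← ih, ← step, sub_add_cancel]

theorem alphaPerm_zpow_apply (m x y : ℤ) :
    (alphaPerm ^ m) (x, y) = (x + 2 * m * y + m ^ 2 - m, y + m) := by
  induction m using Int.induction_on generalizing x y with
  | zero => simp
  | succ k ih =>
    rw [zpow_add_one, Equiv.Perm.mul_apply, show alphaPerm (x, y) = (x + 2 * y, y + 1) from rfl,
      ih, Prod.mk.injEq]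
    constructor <;> ring
  | pred k ih =>
    rw [zpow_sub_one, Equiv.Perm.mul_apply,
      show alphaPerm⁻¹ (x, y) = (x - 2 * (y - 1), y - 1) from rfl, ih, Prod.mk.injEq]
    constructor <;> ring

/-- `β P_k = (k + 1, k + 1)`, and `α ^ m` shifts the second coordinate by `m`, which forces
`m = -(2k + 1)`; the first coordinate then happens to come out right. -/
theorem alphaPerm_zpow_mul_betaPerm_apply (k : ℤ) :
    (alphaPerm ^ (-(2 * k + 1)) * betaPerm) (k, 1 - k) = (k + 1, 1 - (k + 1)) := by
  rw [Equiv.Perm.mul_apply, show betaPerm (k, 1 - k) = (k + 1, 2 * k + (1 - k)) from rfl,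
    alphaPerm_zpow_apply, Prod.mk.injEq]
  constructor <;> ring

/-- The orbit of `(0,0)` under the group of transformations of `ℤ²` generated by
`α` and `β` contains every point `P_n = (n, 1-n)`, `n ∈ ℤ`. -/
theorem orbit_contains_line (n : ℤ) :
    ∃ g ∈ Subgroup.closure ({alphaPerm, betaPerm} : Set (Equiv.Perm (ℤ × ℤ))),
      g ((0, 0) : ℤ × ℤ) = (n, 1 - n) := by
  set H := Subgroup.closure ({alphaPerm, betaPerm} : Set (Equiv.Perm (ℤ × ℤ)))
  have alpha_mem : alphaPerm ∈ H := Subgroup.subset_closure (Or.inl rfl)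
  have beta_mem : betaPerm ∈ H := Subgroup.subset_closure (Or.inr rfl)
  have line_orbit := MulAction.orbit_eq_orbit_zero_of_forall_exists_smul_eq_succ H
    (fun k : ℤ => ((k, 1 - k) : ℤ × ℤ))
    (fun k => ⟨_, mul_mem (zpow_mem alpha_mem _) beta_mem, alphaPerm_zpow_mul_betaPerm_apply k⟩) n
  have origin_orbit : MulAction.orbit H ((0, 1 - 0) : ℤ × ℤ) = MulAction.orbit H (0, 0) :=
    MulAction.orbit_smul (⟨alphaPerm, alpha_mem⟩ : H) ((0, 0) : ℤ × ℤ)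
  obtain ⟨⟨g, hg⟩, hgn⟩ := MulAction.mem_orbit_iff.mp
    (origin_orbit ▸ line_orbit ▸ MulAction.mem_orbit_self ((n, 1 - n) : ℤ × ℤ))
  exact ⟨g, hg, hgn⟩
end

section
/- Let F be the free group on generators a, b acting on ℤ² via a ↦ α and b ↦ β, where α(x,y) = (x+2y, y+1) and β(x,y) = (x+1, 2x+y). Then the stabilizer of (0,0) in F is not finitely generated. -/
/-- The action of the free group on two generators `a, b` on `ℤ²`, with
`a` acting as `α` and `b` acting as `β`. -/
def affAction : FreeGroup Bool →* Equiv.Perm (ℤ × ℤ) :=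
  FreeGroup.lift (fun b : Bool => if b then alphaPerm else betaPerm)

/-!
To a word `w` and a point `p` attach the signed count of the edges of the Schreier graph of
`⟨α, β⟩` on `ℤ²` crossed by the path of `w` from `p`. On loops at `(0,0)` this count is additive,
so if finitely many loops generated the stabilizer, all loops at `(0,0)` would cross only
edges from a fixed finite set. But `(a b⁻¹)²` fixes the diagonal pointwise, and its loop at
`(-n,-n)` crosses the `b`-edge leaving `(-n-1, n+2)` once, backwards; conjugating it by a path
from `(0,0)` to `(-n,-n)` gives a loop at `(0,0)` with the same net crossing of that edge.
-/

/-- The unrestricted wreath product `M ≀ Equiv.Perm X`. -/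
@[ext]
structure WreathPerm (X M : Type*) where
  cochain : X → M
  perm : Equiv.Perm X

namespace WreathPerm

variable {X M : Type*} [AddCommGroup M]

instance : Group (WreathPerm X M) where
  mul x y := ⟨fun p => y.cochain p + x.cochain (y.perm p), x.perm * y.perm⟩
  one := ⟨0, 1⟩
  inv x := ⟨fun p => -x.cochain (x.perm⁻¹ p), x.perm⁻¹⟩
  mul_assoc x y z := WreathPerm.ext (funext fun p => (add_assoc _ _ _).symm) (mul_assoc _ _ _)
  one_mul x := WreathPerm.ext (funext fun p => add_zero _) (one_mul _)
  mul_one x := WreathPerm.ext (funext fun p => zero_add _) (mul_one _)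
  inv_mul_cancel x := WreathPerm.ext
    (funext fun p => show x.cochain p + -x.cochain (x.perm⁻¹ (x.perm p)) = 0 by simp)
    (inv_mul_cancel _)

@[simp] lemma mul_cochain (x y : WreathPerm X M) (p : X) :
    (x * y).cochain p = y.cochain p + x.cochain (y.perm p) := rfl
@[simp] lemma inv_cochain (x : WreathPerm X M) (p : X) :
    x⁻¹.cochain p = -x.cochain (x.perm⁻¹ p) := rfl
@[simp] lemma inv_perm (x : WreathPerm X M) : x⁻¹.perm = x.perm⁻¹ := rfl
@[simp] lemma one_cochain (p : X) : (1 : WreathPerm X M).cochain p = 0 := rfl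

def permHom : WreathPerm X M →* Equiv.Perm X where
  toFun := perm
  map_one' := rfl
  map_mul' _ _ := rfl

lemma conj_cochain_of_perm_apply_eq {x y : WreathPerm X M} {p : X}
    (hy : y.perm (x.perm p) = x.perm p) :
    (x⁻¹ * y * x).cochain p = y.cochain (x.perm p) := by
  simp only [mul_cochain, inv_cochain, hy, Equiv.Perm.coe_inv, Equiv.symm_apply_apply]
  abel

end WreathPerm

lemma Finsupp.exists_finset_support_subset_of_fg {α : Type*}
    {H : Subgroup (Multiplicative (α →₀ ℤ))} (hH : H.FG) :
    ∃ T : Finset α, ∀ f ∈ H, f.toAdd.support ⊆ T := by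
  classical
  obtain ⟨G, rfl⟩ := hH
  refine ⟨G.biUnion fun g => g.toAdd.support, fun f hf => ?_⟩
  suffices Subgroup.closure (G : Set _) ≤
      (Finsupp.supported ℤ ℤ (G.biUnion fun g => g.toAdd.support : Set α)).toAddSubgroup.toSubgroup
    from Finset.coe_subset.mp ((Finsupp.mem_supported ℤ _).mp (this hf))
  exact (Subgroup.closure_le _).mpr fun g hg =>
    (Finsupp.mem_supported ℤ _).mpr (Finset.coe_subset.mpr (Finset.subset_biUnion_of_mem _ hg))

section SchreierGraph

variable {S X : Type*}

open WreathPerm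

/-- The cochain of `w` at `p` counts, with signs, the edges `(q, s)` from `q` to `σ s q`
crossed by the path of `w` starting at `p`. -/
noncomputable def schreierLift (σ : S → Equiv.Perm X) :
    FreeGroup S →* WreathPerm X ((X × S) →₀ ℤ) :=
  FreeGroup.lift fun s => ⟨fun p => Finsupp.single (p, s) 1, σ s⟩

@[simp] lemma schreierLift_of (σ : S → Equiv.Perm X) (s : S) :
    schreierLift σ (.of s) = ⟨fun p => Finsupp.single (p, s) 1, σ s⟩ :=
  FreeGroup.lift_apply_of

lemma permHom_comp_schreierLift (σ : S → Equiv.Perm X) :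
    permHom.comp (schreierLift σ) = FreeGroup.lift σ :=
  FreeGroup.ext_hom _ _ fun s => by simp [permHom]

@[simp] lemma schreierLift_perm (σ : S → Equiv.Perm X) (w : FreeGroup S) :
    (schreierLift σ w).perm = FreeGroup.lift σ w :=
  DFunLike.congr_fun (permHom_comp_schreierLift σ) w

noncomputable def loopChain (σ : S → Equiv.Perm X) (p : X) :
    Subgroup.comap (FreeGroup.lift σ) (MulAction.stabilizer (Equiv.Perm X) p) →*
      Multiplicative ((X × S) →₀ ℤ) where
  toFun w := .ofAdd ((schreierLift σ w).cochain p)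
  map_one' := by simp
  map_mul' v w := by
    have hw : FreeGroup.lift σ w p = p := w.2
    simp [hw, add_comm]

lemma exists_finset_support_subset_of_stabilizer_fg (σ : S → Equiv.Perm X) (p : X)
    (hfg : (Subgroup.comap (FreeGroup.lift σ) (MulAction.stabilizer (Equiv.Perm X) p)).FG) :
    ∃ T : Finset (X × S), ∀ w ∈ Subgroup.comap (FreeGroup.lift σ)
      (MulAction.stabilizer (Equiv.Perm X) p), ((schreierLift σ w).cochain p).support ⊆ T := by
  have := (Group.fg_iff_subgroup_fg _).mpr hfg
  obtain ⟨T, hT⟩ := Finsupp.exists_finset_support_subset_of_fg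
    ((Group.fg_iff_subgroup_fg _).mp (Group.fg_range (loopChain σ p)))
  exact ⟨T, fun w hw => hT _ ⟨⟨w, hw⟩, rfl⟩⟩

end SchreierGraph

def alphaBeta : Bool → Equiv.Perm (ℤ × ℤ) := fun b => if b then alphaPerm else betaPerm

lemma affAction_eq_lift : affAction = FreeGroup.lift alphaBeta := rfl

@[simp] lemma alphaBeta_true : alphaBeta true = alphaPerm := rfl
@[simp] lemma alphaBeta_false : alphaBeta false = betaPerm := rfl

@[simp] lemma alphaPerm_apply (x y : ℤ) : alphaPerm (x, y) = (x + 2 * y, y + 1) := rfl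
@[simp] lemma alphaPerm_inv_apply (x y : ℤ) :
    alphaPerm⁻¹ (x, y) = (x - 2 * (y - 1), y - 1) := rfl
@[simp] lemma betaPerm_inv_apply (x y : ℤ) :
    betaPerm⁻¹ (x, y) = (x - 1, y - 2 * (x - 1)) := rfl

lemma betaPerm_inv_pow_apply (k : ℕ) (x y : ℤ) :
    (betaPerm⁻¹ ^ k) (x, y) = (x - k, y - 2 * k * x + k ^ 2 + k) := by
  induction k generalizing x y with
  | zero => simp
  | succ k ih =>
    rw [pow_succ, Equiv.Perm.mul_apply, betaPerm_inv_apply, ih]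
    push_cast
    ext <;> ring

def diagPath : ℕ → FreeGroup Bool
  | 0 => 1
  | n + 1 => (.of false)⁻¹ ^ (2 * n + 3) * (.of true)⁻¹ * diagPath n

lemma lift_diagPath_apply (n : ℕ) :
    FreeGroup.lift alphaBeta (diagPath n) (0, 0) = (-(n : ℤ), -(n : ℤ)) := by
  induction n with
  | zero => rfl
  | succ n ih =>
    simp only [diagPath, map_mul, map_inv, map_pow, FreeGroup.lift_apply_of, Equiv.Perm.mul_apply,
      ih, alphaBeta_true, alphaBeta_false, alphaPerm_inv_apply, betaPerm_inv_pow_apply]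
    push_cast
    ext <;> ring

def diagLoop : FreeGroup Bool := .of true * (.of false)⁻¹ * .of true * (.of false)⁻¹

lemma lift_diagLoop_apply (t : ℤ) : FreeGroup.lift alphaBeta diagLoop (t, t) = (t, t) := by
  simp only [diagLoop, map_mul, map_inv, FreeGroup.lift_apply_of, Equiv.Perm.mul_apply,
    alphaBeta_true, alphaBeta_false, alphaPerm_apply, betaPerm_inv_apply]
  ext <;> ring

lemma schreierLift_diagLoop_cochain (t : ℤ) :
    (schreierLift alphaBeta diagLoop).cochain (t, t) =
      -Finsupp.single ((t - 1, 2 - t), false) 1 + Finsupp.single ((t - 1, 2 - t), true) 1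
        - Finsupp.single ((2 - t, t - 1), false) 1 + Finsupp.single ((2 - t, t - 1), true) 1 := by
  simp only [diagLoop, map_mul, map_inv, schreierLift_of, WreathPerm.mul_cochain,
    WreathPerm.inv_cochain, WreathPerm.inv_perm, alphaBeta_true, alphaBeta_false, alphaPerm_apply,
    betaPerm_inv_apply]
  ring_nf
  abel

lemma schreierLift_diagLoop_cochain_apply (t : ℤ) :
    (schreierLift alphaBeta diagLoop).cochain (t, t) ((t - 1, 2 - t), false) = -1 := by
  have hne : (2 - t, t - 1) ≠ (t - 1, 2 - t) := by
    simp only [ne_eq, Prod.mk.injEq]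
    omega
  simp [schreierLift_diagLoop_cochain, hne]

def stabLoop (n : ℕ) : FreeGroup Bool := (diagPath n)⁻¹ * diagLoop * diagPath n

lemma stabLoop_mem (n : ℕ) : stabLoop n ∈ Subgroup.comap (FreeGroup.lift alphaBeta)
    (MulAction.stabilizer (Equiv.Perm (ℤ × ℤ)) ((0, 0) : ℤ × ℤ)) := by
  simp only [Subgroup.mem_comap, MulAction.mem_stabilizer_iff, Equiv.Perm.smul_def, stabLoop,
    map_mul, map_inv, Equiv.Perm.mul_apply, lift_diagPath_apply, lift_diagLoop_apply,
    Equiv.Perm.inv_eq_iff_eq]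

lemma schreierLift_stabLoop_cochain (n : ℕ) :
    (schreierLift alphaBeta (stabLoop n)).cochain (0, 0) ((-(n : ℤ) - 1, n + 2), false) = -1 := by
  rw [stabLoop, map_mul, map_mul, map_inv, WreathPerm.conj_cochain_of_perm_apply_eq]
  · rw [schreierLift_perm, lift_diagPath_apply, ← schreierLift_diagLoop_cochain_apply (-n),
      sub_neg_eq_add, add_comm]
  · rw [schreierLift_perm, schreierLift_perm, lift_diagPath_apply, lift_diagLoop_apply]

/-- The stabilizer of `(0,0)` for the action of the free group `F₂ = ⟨a,b⟩` on `ℤ²`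
via `a ↦ α`, `b ↦ β` is not finitely generated. -/
theorem stabilizer_not_fg :
    ¬ (Subgroup.comap affAction
        (MulAction.stabilizer (Equiv.Perm (ℤ × ℤ)) ((0, 0) : ℤ × ℤ))).FG := by
  rw [affAction_eq_lift]
  intro hfg
  obtain ⟨T, hT⟩ := exists_finset_support_subset_of_stabilizer_fg alphaBeta (0, 0) hfg
  have edge_injective : Function.Injective fun n : ℕ => ((-(n : ℤ) - 1, (n : ℤ) + 2), false) :=
    fun m n h => by simpa using h
  obtain ⟨_, ⟨n, rfl⟩, hn⟩ :=
    (Set.infinite_range_of_injective edge_injective).exists_notMem_finset T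
  refine hn (hT (stabLoop n) (stabLoop_mem n) ?_)
  rw [Finsupp.mem_support_iff, schreierLift_stabLoop_cochain]
  decide
end

section
/- Let H = { [[w,0],[0,1]] : w ∈ F } and K = ⟨û, v̂⟩ ≤ SL(3,ℤ), where F = ⟨U,V⟩ with U = [[1,2],[0,1]], V = [[1,0],[2,1]], û is the 3×3 matrix with rows (1,2,0),(0,1,1),(0,0,1), and v̂ has rows (1,0,1),(2,1,0),(0,0,1). Then H ∩ K is isomorphic to the stabilizer of (0,0) in F under the affine action where U acts as (x,y) ↦ (x+2y, y+1) and V acts as (x,y) ↦ (x+1, 2x+y). -/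
abbrev SL3 := Matrix.SpecialLinearGroup (Fin 3) ℤ

/-- `u = [[U,0],[0,1]]` with `U = [[1,2],[0,1]]`. -/
def umat : SL3 := ⟨!![1, 2, 0; 0, 1, 0; 0, 0, 1], by decide⟩

/-- `v = [[V,0],[0,1]]` with `V = [[1,0],[2,1]]`. -/
def vmat : SL3 := ⟨!![1, 0, 0; 2, 1, 0; 0, 0, 1], by decide⟩

/-- The affine lift `û` of `U`. -/
def uhat : SL3 := ⟨!![1, 2, 0; 0, 1, 1; 0, 0, 1], by decide⟩

/-- The affine lift `v̂` of `V`. -/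
def vhat : SL3 := ⟨!![1, 0, 1; 2, 1, 0; 0, 0, 1], by decide⟩

/-- `H`, the image of `F = ⟨U,V⟩` in the upper-left block. -/
def Hsub : Subgroup SL3 := Subgroup.closure {umat, vmat}

/-- `K = ⟨û, v̂⟩`. -/
def Ksub : Subgroup SL3 := Subgroup.closure {uhat, vhat}

/-!
The map `w ↦ ŵ` is a homomorphism `F → SL(3,ℤ)` with image `K`, and `ŵ` acts on the affine
points `(x, y, 1)` of `ℤ³` as `w` acts on `(x, y)`. On vectors `(x, y, 0)` it acts through its linear
part, the block matrix `[[w,0],[0,1]]`; so `ŵ` differs from that block matrix only in its last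
column, the image of the origin. Hence `ŵ ∈ H` exactly when `w` fixes the origin. Finally `w ↦ ŵ`
is injective, because `w ↦ [[w,0],[0,1]]` is (Sanov's ping-pong argument).
-/

open Pointwise Function

namespace FreeGroup

theorem equivariant_of_forall_of {ι G H α β : Type*} [Group G] [Group H] [MulAction G α]
    [MulAction H β] {f : FreeGroup ι →* G} {g : FreeGroup ι →* H} {j : α → β}
    (h : ∀ i a, g (of i) • j a = j (f (of i) • a)) (w : FreeGroup ι) (a : α) :
    g w • j a = j (f w • a) := by
  induction w using FreeGroup.induction_on generalizing a with
  | C1 => simp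
  | of i => exact h i a
  | inv_of i _ => rw [_root_.map_inv, _root_.map_inv, inv_smul_eq_iff, h, smul_inv_smul]
  | mul x y hx hy => rw [_root_.map_mul, _root_.map_mul, mul_smul, hy, hx, mul_smul]

/-- Parabolic generators fix a boundary point, so the four-set ping-pong of
`FreeGroup.injective_lift_of_ping_pong` does not apply to them; here the sets are played off
against all nonzero powers instead. -/
theorem injective_lift_of_zpow_ping_pong {ι G α : Type*} [Nontrivial ι] [Group G]
    [MulAction G α] (a : ι → G) (X : ι → Set α) (hXnonempty : ∀ i, (X i).Nonempty)
    (hXdisj : Pairwise (Disjoint on X))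
    (hpp : Pairwise fun i j => ∀ n : ℤ, n ≠ 0 → a i ^ n • X j ⊆ X i) :
    Injective (lift a) := by
  have hlift : lift a = (Monoid.CoprodI.lift fun i => lift fun _ => a i).comp
      (freeGroupEquivCoprodI (ι := ι)).toMonoidHom := by
    ext i
    simp
  rw [hlift, MonoidHom.coe_comp]
  refine Injective.comp ?_ (MulEquiv.injective _)
  refine Monoid.CoprodI.lift_injective_of_ping_pong _ ?_ X hXnonempty hXdisj ?_
  · refine Or.inr ⟨Classical.arbitrary ι, ?_⟩
    rw [Cardinal.mk_congr freeGroupUnitEquivInt, Cardinal.mk_int]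
    exact_mod_cast (Cardinal.natCast_lt_aleph0 (n := 3)).le
  · intro i j hij h hh
    have hz : h ∈ Subgroup.zpowers (of ()) := by
      rw [Subgroup.zpowers_eq_closure, ← Set.range_const (ι := Unit) (c := of ()),
        closure_range_of]
      trivial
    obtain ⟨n, rfl⟩ := Subgroup.mem_zpowers_iff.mp hz
    have hn : n ≠ 0 := by rintro rfl; exact hh (zpow_zero _)
    simpa using hpp hij n hn

end FreeGroup

theorem abs_lt_abs_add_two_mul {a b n : ℤ} (hn : n ≠ 0) (h : |a| < |b|) :
    |b| < |a + 2 * n * b| := by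
  have hn1 : 1 ≤ |n| := Int.one_le_abs hn
  calc |b| < 2 * |n| * |b| - |a| := by nlinarith [abs_nonneg a]
    _ = |2 * n * b| - |a| := by simp [abs_mul]
    _ ≤ |a + 2 * n * b| := by simpa [add_comm] using abs_sub_abs_le_abs_sub (2 * n * b) (-a)

theorem umat_smul (v : Fin 3 → ℤ) : umat • v = ![v 0 + 2 * v 1, v 1, v 2] := by
  show Matrix.mulVec umat.1 v = _
  ext i; fin_cases i <;> simp [umat, Matrix.mulVec, dotProduct, Fin.sum_univ_three]

theorem vmat_smul (v : Fin 3 → ℤ) : vmat • v = ![v 0, 2 * v 0 + v 1, v 2] := by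
  show Matrix.mulVec vmat.1 v = _
  ext i; fin_cases i <;> simp [vmat, Matrix.mulVec, dotProduct, Fin.sum_univ_three]

theorem uhat_smul (v : Fin 3 → ℤ) : uhat • v = ![v 0 + 2 * v 1, v 1 + v 2, v 2] := by
  show Matrix.mulVec uhat.1 v = _
  ext i; fin_cases i <;> simp [uhat, Matrix.mulVec, dotProduct, Fin.sum_univ_three]

theorem vhat_smul (v : Fin 3 → ℤ) : vhat • v = ![v 0 + v 2, 2 * v 0 + v 1, v 2] := by
  show Matrix.mulVec vhat.1 v = _
  ext i; fin_cases i <;> simp [vhat, Matrix.mulVec, dotProduct, Fin.sum_univ_three]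

theorem umat_inv_smul (v : Fin 3 → ℤ) : umat⁻¹ • v = ![v 0 - 2 * v 1, v 1, v 2] := by
  rw [inv_smul_eq_iff, umat_smul]
  ext i; fin_cases i <;> simp

theorem vmat_inv_smul (v : Fin 3 → ℤ) : vmat⁻¹ • v = ![v 0, v 1 - 2 * v 0, v 2] := by
  rw [inv_smul_eq_iff, vmat_smul]
  ext i; fin_cases i <;> simp

theorem umat_zpow_smul (n : ℤ) (v : Fin 3 → ℤ) :
    (umat ^ n) • v = ![v 0 + 2 * n * v 1, v 1, v 2] := by
  induction n using Int.induction_on generalizing v with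
  | zero => ext i; fin_cases i <;> simp
  | succ k ih =>
    rw [zpow_add_one, mul_smul, umat_smul, ih]
    ext i; fin_cases i <;> simp; ring
  | pred k ih =>
    rw [zpow_sub_one, mul_smul, umat_inv_smul, ih]
    ext i; fin_cases i <;> simp; ring

theorem vmat_zpow_smul (n : ℤ) (v : Fin 3 → ℤ) :
    (vmat ^ n) • v = ![v 0, v 1 + 2 * n * v 0, v 2] := by
  induction n using Int.induction_on generalizing v with
  | zero => ext i; fin_cases i <;> simp
  | succ k ih =>
    rw [zpow_add_one, mul_smul, vmat_smul, ih]
    ext i; fin_cases i <;> simp; ring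
  | pred k ih =>
    rw [zpow_sub_one, mul_smul, vmat_inv_smul, ih]
    ext i; fin_cases i <;> simp; ring

def affineLift : FreeGroup Bool →* SL3 :=
  FreeGroup.lift fun b => if b then uhat else vhat

def blockLift : FreeGroup Bool →* SL3 :=
  FreeGroup.lift fun b => if b then umat else vmat

theorem Ksub_eq_range : Ksub = affineLift.range := by
  rw [affineLift, FreeGroup.range_lift_eq_closure, Ksub]
  congr 1
  ext x
  simp [or_comm]

theorem Hsub_eq_range : Hsub = blockLift.range := by
  rw [blockLift, FreeGroup.range_lift_eq_closure, Hsub]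
  congr 1
  ext x
  simp [or_comm]

theorem blockLift_injective : Injective blockLift := by
  refine FreeGroup.injective_lift_of_zpow_ping_pong _
    (fun b => if b then {v : Fin 3 → ℤ | |v 1| < |v 0|} else {v | |v 0| < |v 1|}) ?_ ?_ ?_
  · rintro (_ | _)
    · exact ⟨![0, 1, 0], by simp⟩
    · exact ⟨![1, 0, 0], by simp⟩
  · rintro (_ | _) (_ | _) hij <;> first
      | exact absurd rfl hij
      | exact Set.disjoint_left.mpr fun v h1 h2 => by simp at h1 h2; exact h1.asymm h2
  · rintro (_ | _) (_ | _) hij n hn <;> first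
      | exact absurd rfl hij
      | rintro _ ⟨v, hv, rfl⟩
    · simpa [vmat_zpow_smul, add_comm] using abs_lt_abs_add_two_mul hn hv
    · simpa [umat_zpow_smul] using abs_lt_abs_add_two_mul hn hv

def affinePoint (p : ℤ × ℤ) : Fin 3 → ℤ := ![p.1, p.2, 1]

theorem affinePoint_injective : Injective affinePoint := fun _ _ h =>
  Prod.ext (congrFun h 0) (congrFun h 1)

def planeProj (v : Fin 3 → ℤ) : Fin 3 → ℤ := ![v 0, v 1, 0]

theorem affineLift_smul_affinePoint (w : FreeGroup Bool) (p : ℤ × ℤ) :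
    affineLift w • affinePoint p = affinePoint (affAction w p) := by
  refine FreeGroup.equivariant_of_forall_of (f := affAction) (fun b q => ?_) w p
  cases b <;> ext i <;> fin_cases i <;>
    simp [affineLift, affAction, uhat_smul, vhat_smul, alphaPerm, betaPerm, affinePoint]

theorem affineLift_smul_planeProj (w : FreeGroup Bool) (v : Fin 3 → ℤ) :
    affineLift w • planeProj v = planeProj (blockLift w • v) := by
  refine FreeGroup.equivariant_of_forall_of (f := blockLift) (fun b u => ?_) w v
  cases b <;> ext i <;> fin_cases i <;>
    simp [affineLift, blockLift, uhat_smul, vhat_smul, umat_smul, vmat_smul, planeProj]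

theorem blockLift_smul_planeProj (w : FreeGroup Bool) (v : Fin 3 → ℤ) :
    blockLift w • planeProj v = planeProj (blockLift w • v) := by
  refine FreeGroup.equivariant_of_forall_of (f := blockLift) (fun b u => ?_) w v
  cases b <;> ext i <;> fin_cases i <;> simp [blockLift, umat_smul, vmat_smul, planeProj]

theorem Hsub_le_stabilizer : Hsub ≤ MulAction.stabilizer SL3 (affinePoint (0, 0)) := by
  rw [Hsub, Subgroup.closure_le]
  rintro g (rfl | rfl) <;> ext i <;> fin_cases i <;> simp [umat_smul, vmat_smul, affinePoint]

theorem affineLift_eq_blockLift {w : FreeGroup Bool} (hw : affAction w (0, 0) = (0, 0)) :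
    affineLift w = blockLift w := by
  have hfix : blockLift w • affinePoint (0, 0) = affinePoint (0, 0) :=
    Hsub_le_stabilizer (Hsub_eq_range ▸ MonoidHom.mem_range.mpr ⟨w, rfl⟩)
  have hsmul : ∀ v : Fin 3 → ℤ, affineLift w • v = blockLift w • v := by
    intro v
    have hv : v = planeProj v + v 2 • affinePoint (0, 0) := by
      ext i; fin_cases i <;> simp [planeProj, affinePoint]
    rw [hv, smul_add, smul_add, smul_comm _ (v 2), smul_comm _ (v 2), affineLift_smul_planeProj,
      blockLift_smul_planeProj, affineLift_smul_affinePoint, hw, hfix]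
  exact Subtype.ext <| Matrix.ext_of_mulVec_single fun k => hsmul _

theorem affineLift_mem_Hsub_iff {w : FreeGroup Bool} :
    affineLift w ∈ Hsub ↔ affAction w (0, 0) = (0, 0) := by
  refine ⟨fun hw => affinePoint_injective ?_, fun hw => ?_⟩
  · rw [← affineLift_smul_affinePoint]
    exact Hsub_le_stabilizer hw
  · rw [affineLift_eq_blockLift hw, Hsub_eq_range]
    exact MonoidHom.mem_range.mpr ⟨w, rfl⟩

theorem affineLift_injective : Injective affineLift := by
  refine (injective_iff_map_eq_one _).mpr fun w hw => blockLift_injective ?_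
  have hfix : affAction w (0, 0) = (0, 0) := affineLift_mem_Hsub_iff.mp (hw ▸ Hsub.one_mem)
  rw [← affineLift_eq_blockLift hfix, hw, map_one]

theorem map_affineLift_stabilizer :
    (Subgroup.comap affAction (MulAction.stabilizer _ ((0, 0) : ℤ × ℤ))).map affineLift =
      Hsub ⊓ Ksub := by
  ext g
  rw [Subgroup.mem_map, Subgroup.mem_inf, Ksub_eq_range]
  constructor
  · rintro ⟨w, hw, rfl⟩
    exact ⟨affineLift_mem_Hsub_iff.mpr hw, w, rfl⟩
  · rintro ⟨hH, w, rfl⟩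
    exact ⟨w, affineLift_mem_Hsub_iff.mp hH, rfl⟩

/-- `H ∩ K` is isomorphic to the stabilizer of `(0,0)` in `F` under the affine action
where `U` acts as `α` and `V` acts as `β`. -/
theorem inter_iso_stabilizer :
    Nonempty ((↥(Hsub ⊓ Ksub)) ≃*
      ↥(Subgroup.comap affAction
          (MulAction.stabilizer (Equiv.Perm (ℤ × ℤ)) ((0, 0) : ℤ × ℤ)))) :=
  ⟨(MulEquiv.subgroupCongr map_affineLift_stabilizer.symm).trans
    (Subgroup.equivMapOfInjective _ _ affineLift_injective).symm⟩
end

section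
/- A subgroup N of a finitely generated free group F(X) is finitely generated if and only if the core of its Schreier graph Γ(N\F, X) is finite, where the core is the subgraph spanned by all vertices and edges lying on reduced closed paths. -/
/-- An element of a free group is *cyclically reduced* if it has minimal word length
(`FreeGroup.norm`) in its conjugacy class. -/
def IsCyclicallyReduced {X : Type*} [DecidableEq X] (w : FreeGroup X) : Prop :=
  ∀ g : FreeGroup X, w.norm ≤ (g * w * g⁻¹).norm

/-!
If `N = ⟨A⟩` with `A` finite and a nontrivial cyclically reduced `w` fixes the coset `gN`, then,
after replacing `w` by `w⁻¹` if needed, no cancellation occurs between `w` and `g`, so for large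
`k` the reduced word of `g` is a suffix of that of `g⁻¹ w ^ k g ∈ N`. Every suffix of the reduced
word of an element of `⟨A⟩` is, modulo `N`, a suffix of a generator or of its inverse; this leaves
finitely many cosets.

Conversely, fix representatives `rep` of minimal length. Write `n ∈ N` as `u c u⁻¹` with `c`
cyclically reduced. The closed path spelled by `c` at the vertex `u⁻¹N` stays in the core, since
every cyclic conjugate of `c` is again cyclically reduced, so `(rep v)⁻¹ c rep v` is a product of
Schreier generators attached to core vertices; and `n` is its conjugate by `u * rep v ∈ N`,
which is shorter than `n`. Induction on length shows that these finitely many generators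
generate `N`.
-/

open List

namespace List

variable {β : Type*}

theorem IsSuffix.isSuffix_or_eq_append {l₁ l₂ l₃ : List β}
    (h : l₁ <:+ l₂ ++ l₃) : l₁ <:+ l₃ ∨ ∃ t, t <:+ l₂ ∧ l₁ = t ++ l₃ := by
  obtain ⟨s, hs⟩ := h
  rcases append_eq_append_iff.mp hs with ⟨t, rfl, rfl⟩ | ⟨t, rfl, rfl⟩
  · exact .inr ⟨t, suffix_append _ _, rfl⟩
  · exact .inl (suffix_append _ _)

theorem IsSuffix.tail {l₁ l₂ : List β} (h : l₁ <:+ l₂) : l₁.tail <:+ l₂.tail := by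
  obtain ⟨_ | ⟨x, t⟩, rfl⟩ := h
  · exact suffix_rfl
  · exact (tail_suffix l₁).trans (suffix_append t l₁)

theorem finite_setOf_isSuffix (l : List β) : {s | s <:+ l}.Finite :=
  l.tails.finite_toSet.subset fun s hs => (mem_tails s l).mpr hs

end List

namespace FreeGroup

variable {α : Type*}

theorem Red.Step.exists_isSuffix_mk_eq {L₁ L₂ S : List (α × Bool)} (h : Red.Step L₁ L₂)
    (hS : S <:+ L₂) : ∃ S', S' <:+ L₁ ∧ mk S' = mk S := by
  obtain @⟨L, R, x, b⟩ := h
  rcases List.IsSuffix.isSuffix_or_eq_append hS with hS | ⟨T, hT, rfl⟩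
  · exact ⟨S, suffix_append_of_suffix (hS.trans ((suffix_cons _ _).trans (suffix_cons _ _))), rfl⟩
  · exact ⟨T ++ (x, b) :: (x, !b) :: R, suffix_append_self_iff.mpr hT, Quot.sound Red.Step.not⟩

theorem Red.exists_isSuffix_mk_eq {L₁ L₂ S : List (α × Bool)} (h : Red L₁ L₂)
    (hS : S <:+ L₂) : ∃ S', S' <:+ L₁ ∧ mk S' = mk S := by
  induction h using Relation.ReflTransGen.head_induction_on generalizing S with
  | refl => exact ⟨S, hS, rfl⟩
  | head hstep _ ih =>
    obtain ⟨S₁, hS₁, hmk₁⟩ := ih hS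
    obtain ⟨S₂, hS₂, hmk₂⟩ := hstep.exists_isSuffix_mk_eq hS₁
    exact ⟨S₂, hS₂, hmk₂.trans hmk₁⟩

variable [DecidableEq α]

theorem tail_isSuffix_reduce_cons {R : List (α × Bool)} (hR : IsReduced R) (a : α × Bool) :
    R.tail <:+ reduce (a :: R) := by
  rw [reduce.cons, hR.reduce_eq]
  rcases R with _ | ⟨y, R⟩
  · simp
  · dsimp only
    split_ifs
    · exact suffix_rfl
    · exact (suffix_cons _ _).trans (suffix_cons _ _)

theorem drop_isSuffix_reduce_append {B : List (α × Bool)} (hB : IsReduced B) :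
    ∀ A : List (α × Bool), B.drop A.length <:+ reduce (A ++ B)
  | [] => by simp [hB.reduce_eq]
  | a :: A => by
    rw [cons_append, ← reduce_cons_reduce, length_cons, ← tail_drop]
    have hred : IsReduced (reduce (A ++ B)) := .of_reduce_eq reduce.idem
    exact (drop_isSuffix_reduce_append hB A).tail.trans (tail_isSuffix_reduce_cons hred a)

theorem norm_pow_le (x : FreeGroup α) : ∀ n : ℕ, (x ^ n).norm ≤ n * x.norm
  | 0 => by simp
  | n + 1 => by
    rw [pow_succ, add_one_mul]
    exact (norm_mul_le _ _).trans (Nat.add_le_add_right (norm_pow_le x n) _)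

theorem norm_conj_le (g x : FreeGroup α) : (g * x * g⁻¹).norm ≤ x.norm + 2 * g.norm := by
  have := norm_mul_le (g * x) g⁻¹
  have := norm_mul_le g x
  rw [norm_inv_eq] at *
  omega

theorem toWord_pow_of_isCyclicallyReduced {x : FreeGroup α}
    (hx : FreeGroup.IsCyclicallyReduced x.toWord) (n : ℕ) :
    (x ^ n).toWord = (replicate n x.toWord).flatten := by
  rw [toWord_pow, (hx.flatten_replicate n).isReduced.reduce_eq]

theorem norm_pow_of_isCyclicallyReduced {x : FreeGroup α}
    (hx : FreeGroup.IsCyclicallyReduced x.toWord) (n : ℕ) : (x ^ n).norm = n * x.norm := by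
  simp [norm, toWord_pow_of_isCyclicallyReduced hx]

open reduceCyclically in
theorem exists_eq_conj_mk_isCyclicallyReduced (x : FreeGroup α) :
    ∃ C R : List (α × Bool), FreeGroup.IsCyclicallyReduced R ∧
      x = mk C * mk R * (mk C)⁻¹ ∧ x.norm = 2 * C.length + R.length := by
  obtain ⟨C, R, hR, hx⟩ : ∃ C R, FreeGroup.IsCyclicallyReduced R ∧ x.toWord = C ++ R ++ invRev C :=
    ⟨_, _, isCyclicallyReduced isReduced_toWord, (conj_conjugator_reduceCyclically _).symm⟩
  refine ⟨C, R, hR, ?_, ?_⟩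
  · rw [← mk_toWord (x := x), hx, inv_mk, mul_mk, mul_mk]
  · rw [norm, hx]
    simp only [length_append, invRev_length]
    omega

theorem isSuffix_toWord_conj_pow {w g : FreeGroup α}
    (hw : FreeGroup.IsCyclicallyReduced w.toWord) (hwg : IsReduced (w.toWord ++ g.toWord))
    {k : ℕ} (hk0 : k ≠ 0) (hk : g.norm ≤ k * w.norm) :
    g.toWord <:+ (g⁻¹ * w ^ k * g).toWord := by
  have hpow : (w ^ k * g).toWord = (replicate k w.toWord).flatten ++ g.toWord := by
    rw [toWord_mul, toWord_pow_of_isCyclicallyReduced hw, IsReduced.reduce_eq]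
    simpa using IsReduced.append_flatten_replicate_append (L₁ := []) hw (by simpa using hwg) hk0
  have h := drop_isSuffix_reduce_append (isReduced_toWord (x := w ^ k * g)) g⁻¹.toWord
  rw [← toWord_mul, ← mul_assoc, hpow, toWord_inv, invRev_length,
    drop_append_of_le_length (by simpa [norm] using hk)] at h
  exact (suffix_append _ _).trans h

theorem isReduced_append_or_inv {w : FreeGroup α} (hw : FreeGroup.IsCyclicallyReduced w.toWord)
    (g : FreeGroup α) :
    IsReduced (w.toWord ++ g.toWord) ∨ IsReduced (w⁻¹.toWord ++ g.toWord) := by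
  have hjoin (x : FreeGroup α) : IsReduced (x.toWord ++ g.toWord) ↔
      ∀ a ∈ x.toWord.getLast?, ∀ b ∈ g.toWord.head?, a.1 = b.1 → a.2 = b.2 :=
    isChain_append.trans (and_iff_right isReduced_toWord |>.trans (and_iff_right isReduced_toWord))
  rw [hjoin, hjoin]
  -- otherwise the last and the first letter of `w.toWord` would cancel
  by_contra! h
  obtain ⟨⟨z, hz, y, hy, hzy, hzy'⟩, ⟨z', hz', y', hy', hzy₁, hzy₁'⟩⟩ := h
  obtain rfl : y' = y := Option.mem_unique hy' hy
  simp only [toWord_inv, invRev, getLast?_reverse, head?_map, Option.mem_map] at hz'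
  obtain ⟨a, ha, rfl⟩ := hz'
  have := hw.2 z hz a ha
  grind

end FreeGroup

open FreeGroup (mk IsReduced)

section CyclicallyReduced

variable {α : Type*} [DecidableEq α]

theorem IsCyclicallyReduced.of_toWord {w : FreeGroup α}
    (hw : FreeGroup.IsCyclicallyReduced w.toWord) : IsCyclicallyReduced w := by
  intro g
  have key (n : ℕ) : n * w.norm ≤ n * (g * w * g⁻¹).norm + 2 * g.norm := by
    have hpow : w ^ n = g⁻¹ * (g * w * g⁻¹) ^ n * g⁻¹⁻¹ := by rw [conj_pow]; group
    calc n * w.norm = (w ^ n).norm := (FreeGroup.norm_pow_of_isCyclicallyReduced hw n).symm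
      _ ≤ ((g * w * g⁻¹) ^ n).norm + 2 * (g⁻¹).norm := hpow ▸ FreeGroup.norm_conj_le _ _
      _ ≤ n * (g * w * g⁻¹).norm + 2 * g.norm := by
        rw [FreeGroup.norm_inv_eq]; gcongr; exact FreeGroup.norm_pow_le _ _
  by_contra! hlt
  have := key (2 * g.norm + 1)
  nlinarith

theorem IsCyclicallyReduced.isCyclicallyReduced_toWord {w : FreeGroup α}
    (hw : IsCyclicallyReduced w) : FreeGroup.IsCyclicallyReduced w.toWord := by
  obtain ⟨C, R, hR, hwCR, hnorm⟩ := FreeGroup.exists_eq_conj_mk_isCyclicallyReduced w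
  have hC : C = [] := by
    have hconj : (mk C)⁻¹ * w * (mk C)⁻¹⁻¹ = mk R := by rw [hwCR]; group
    have h := hw (mk C)⁻¹
    rw [hconj] at h
    have := FreeGroup.norm_mk_le (L₁ := R)
    exact List.eq_nil_of_length_eq_zero (by omega)
  rw [hwCR, hC, ← FreeGroup.one_eq_mk, one_mul, inv_one, mul_one, FreeGroup.toWord_mk,
    hR.isReduced.reduce_eq]
  exact hR

theorem IsCyclicallyReduced.inv {w : FreeGroup α} (hw : IsCyclicallyReduced w) :
    IsCyclicallyReduced w⁻¹ := fun g => by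
  rw [FreeGroup.norm_inv_eq, ← FreeGroup.norm_inv_eq (x := g * w⁻¹ * g⁻¹)]
  simpa only [mul_inv_rev, inv_inv, mul_assoc] using hw g

theorem IsCyclicallyReduced.conj_of_norm_le {c : FreeGroup α} (hc : IsCyclicallyReduced c)
    {g : FreeGroup α} (hg : (g * c * g⁻¹).norm ≤ c.norm) : IsCyclicallyReduced (g * c * g⁻¹) :=
  fun h => hg.trans <| by simpa only [mul_inv_rev, mul_assoc] using hc (h * g)

theorem exists_eq_conj_isCyclicallyReduced (x : FreeGroup α) :
    ∃ u c, x = u * c * u⁻¹ ∧ IsCyclicallyReduced c ∧ 2 * u.norm + c.norm ≤ x.norm := by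
  obtain ⟨C, R, hR, hx, hnorm⟩ := FreeGroup.exists_eq_conj_mk_isCyclicallyReduced x
  refine ⟨mk C, mk R, hx, IsCyclicallyReduced.of_toWord ?_, ?_⟩
  · rwa [FreeGroup.toWord_mk, hR.isReduced.reduce_eq]
  · have := FreeGroup.norm_mk_le (L₁ := C)
    have := FreeGroup.norm_mk_le (L₁ := R)
    omega

end CyclicallyReduced

theorem QuotientGroup.smul_coe_eq_self_iff {G : Type*} [Group G] {N : Subgroup G} {w g : G} :
    w • (g : G ⧸ N) = g ↔ g⁻¹ * w * g ∈ N := by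
  rw [MulAction.Quotient.smul_mk, smul_eq_mul, QuotientGroup.eq, ← inv_mem_iff]
  group

section SchreierGenerators

variable {α β : Type*} [MulAction (FreeGroup α) β]

def schreierGenerators (S : Set β) (rep : β → FreeGroup α) : Set (FreeGroup α) :=
  (fun p : β × (α × Bool) => (rep (mk [p.2] • p.1))⁻¹ * mk [p.2] * rep p.1) '' (S ×ˢ Set.univ)

theorem finite_schreierGenerators [Finite α] {S : Set β} (hS : S.Finite) (rep : β → FreeGroup α) :
    (schreierGenerators S rep).Finite :=
  (hS.prod Set.finite_univ).image _

theorem rep_inv_mul_mk_mul_rep_mem_closure {S : Set β} (rep : β → FreeGroup α) {v : β} :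
    ∀ {D : List (α × Bool)}, (∀ D', D' <:+ D → mk D' • v ∈ S) →
      (rep (mk D • v))⁻¹ * mk D * rep v ∈ Subgroup.closure (schreierGenerators S rep)
  | [], _ => by simp [← FreeGroup.one_eq_mk]
  | l :: D, hD => by
    have hmk : mk (l :: D) = mk [l] * mk D := by rw [FreeGroup.mul_mk, singleton_append]
    have hsplit : (rep (mk (l :: D) • v))⁻¹ * mk (l :: D) * rep v =
        ((rep (mk [l] • mk D • v))⁻¹ * mk [l] * rep (mk D • v)) *
          ((rep (mk D • v))⁻¹ * mk D * rep v) := by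
      rw [hmk, mul_smul]; group
    rw [hsplit]
    refine mul_mem (Subgroup.subset_closure ⟨(mk D • v, l), ⟨hD D (suffix_cons l D), trivial⟩, rfl⟩)
      (rep_inv_mul_mk_mul_rep_mem_closure rep fun D' hD' => hD D' (hD'.trans (suffix_cons l D)))

theorem schreierGenerators_subset {N : Subgroup (FreeGroup α)} {rep : FreeGroup α ⧸ N → FreeGroup α}
    (hrep : ∀ v, (rep v : FreeGroup α ⧸ N) = v) (S : Set (FreeGroup α ⧸ N)) :
    schreierGenerators S rep ⊆ N := by
  rintro _ ⟨⟨v, l⟩, -, rfl⟩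
  dsimp only
  rw [mul_assoc]
  apply QuotientGroup.eq.mp
  rw [hrep, ← smul_eq_mul, ← MulAction.Quotient.smul_mk, hrep]

end SchreierGenerators

section SchreierCore

variable (α : Type*) [DecidableEq α] (β : Type*) [MulAction (FreeGroup α) β]

/-- The vertices of the core of the Schreier graph of the action: those lying on a closed path
whose label is a nontrivial cyclically reduced word. -/
def schreierCore : Set β :=
  {v | ∃ w : FreeGroup α, w ≠ 1 ∧ IsCyclicallyReduced w ∧ w • v = v}

variable {α β}

theorem smul_mem_schreierCore_of_isSuffix {c : FreeGroup α} (hc1 : c ≠ 1)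
    (hc : IsCyclicallyReduced c) {v : β} (hcv : c • v = v) {D : List (α × Bool)}
    (hD : D <:+ c.toWord) : mk D • v ∈ schreierCore α β := by
  obtain ⟨E, hE⟩ := hD
  have hc_eq : c = mk E * mk D := by rw [← FreeGroup.mk_toWord (x := c), ← hE, FreeGroup.mul_mk]
  have hnorm : (mk D * c * (mk D)⁻¹).norm ≤ c.norm := by
    calc (mk D * c * (mk D)⁻¹).norm = (mk D * mk E).norm := by rw [hc_eq]; group
      _ ≤ D.length + E.length :=
        (FreeGroup.norm_mul_le _ _).trans (add_le_add FreeGroup.norm_mk_le FreeGroup.norm_mk_le)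
      _ = c.norm := by rw [FreeGroup.norm, ← hE, length_append, add_comm]
  refine ⟨mk D * c * (mk D)⁻¹, mt conj_eq_one_iff.mp hc1, hc.conj_of_norm_le hnorm, ?_⟩
  simp only [mul_smul, inv_smul_smul, hcv]

end SchreierCore

section FiniteCore

variable {α : Type*} [DecidableEq α] {N : Subgroup (FreeGroup α)}

theorem exists_section_norm_le (N : Subgroup (FreeGroup α)) :
    ∃ rep : FreeGroup α ⧸ N → FreeGroup α,
      (∀ v, (rep v : FreeGroup α ⧸ N) = v) ∧ ∀ g : FreeGroup α, (rep g).norm ≤ g.norm := by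
  have (v : FreeGroup α ⧸ N) : ∃ r : FreeGroup α, (r : FreeGroup α ⧸ N) = v ∧
      ∀ g : FreeGroup α, (g : FreeGroup α ⧸ N) = v → r.norm ≤ g.norm := by
    obtain ⟨r, hr, hmin⟩ := (InvImage.wf FreeGroup.norm wellFounded_lt).has_min
      {g : FreeGroup α | (g : FreeGroup α ⧸ N) = v} (QuotientGroup.mk_surjective v)
    exact ⟨r, hr, fun g hg => not_lt.mp (hmin g hg)⟩
  choose rep hrep hmin using this
  exact ⟨rep, hrep, fun g => hmin _ g rfl⟩

theorem mem_closure_schreierGenerators {rep : FreeGroup α ⧸ N → FreeGroup α}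
    (hrep : ∀ v, (rep v : FreeGroup α ⧸ N) = v) (hmin : ∀ g : FreeGroup α, (rep g).norm ≤ g.norm)
    {n : FreeGroup α} (hn : n ∈ N) :
    n ∈ Subgroup.closure (schreierGenerators (schreierCore α (FreeGroup α ⧸ N)) rep) := by
  induction hk : n.norm using Nat.strong_induction_on generalizing n with
  | _ k ih =>
  obtain ⟨u, c, rfl, hc, hnorm⟩ := exists_eq_conj_isCyclicallyReduced n
  by_cases hc1 : c = 1
  · simp [hc1]
  set v : FreeGroup α ⧸ N := ↑u⁻¹
  have hcv : c • v = v := QuotientGroup.smul_coe_eq_self_iff.mpr (by simpa using hn)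
  have hm : u * rep v ∈ N := by simpa using QuotientGroup.eq.mp (hrep v).symm
  have hlt : (u * rep v).norm < k := by
    have := FreeGroup.norm_mul_le u (rep v)
    have : (rep v).norm ≤ u.norm := (hmin u⁻¹).trans_eq FreeGroup.norm_inv_eq
    have := (FreeGroup.norm_eq_zero.not).mpr hc1
    omega
  have hloop : (rep v)⁻¹ * c * rep v ∈
      Subgroup.closure (schreierGenerators (schreierCore α (FreeGroup α ⧸ N)) rep) := by
    have := rep_inv_mul_mk_mul_rep_mem_closure rep (D := c.toWord)
      fun D hD => smul_mem_schreierCore_of_isSuffix hc1 hc hcv hD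
    rwa [FreeGroup.mk_toWord, hcv] at this
  have hdecomp : u * c * u⁻¹ = (u * rep v) * ((rep v)⁻¹ * c * rep v) * (u * rep v)⁻¹ := by
    group
  rw [hdecomp]
  exact mul_mem (mul_mem (ih _ hlt hm rfl) hloop) (inv_mem (ih _ hlt hm rfl))

theorem fg_of_finite_schreierCore [Finite α] (h : (schreierCore α (FreeGroup α ⧸ N)).Finite) :
    N.FG := by
  obtain ⟨rep, hrep, hmin⟩ := exists_section_norm_le N
  refine (Subgroup.fg_iff N).mpr ⟨schreierGenerators (schreierCore α _) rep, ?_,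
    finite_schreierGenerators h rep⟩
  exact le_antisymm ((Subgroup.closure_le N).mpr (schreierGenerators_subset hrep _))
    fun n hn => mem_closure_schreierGenerators hrep hmin hn

end FiniteCore

section FinitelyGenerated

open scoped Pointwise

variable {α : Type*} [DecidableEq α]

def generatorSuffixes (A : Set (FreeGroup α)) : Set (FreeGroup α) :=
  ⋃ a ∈ insert 1 (A ∪ A⁻¹), mk '' {S | S <:+ a.toWord}

theorem finite_generatorSuffixes {A : Set (FreeGroup α)} (hA : A.Finite) :
    (generatorSuffixes A).Finite :=
  ((hA.union hA.inv).insert 1).biUnion fun _ _ => (List.finite_setOf_isSuffix _).image mk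

theorem coe_mk_mem_image_generatorSuffixes {A : Set (FreeGroup α)} {n : FreeGroup α}
    (hn : n ∈ Subgroup.closure A) {S : List (α × Bool)} (hS : S <:+ n.toWord) :
    (mk S : FreeGroup α ⧸ Subgroup.closure A) ∈ (↑) '' generatorSuffixes A := by
  induction hn using Subgroup.closure_induction'' generalizing S with
  | mem x hx => exact ⟨mk S, Set.mem_biUnion (.inr (.inl hx)) ⟨S, hS, rfl⟩, rfl⟩
  | inv_mem x hx =>
    exact ⟨mk S, Set.mem_biUnion (.inr (.inr (by simpa using hx))) ⟨S, hS, rfl⟩, rfl⟩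
  | one => exact ⟨mk S, Set.mem_biUnion (Set.mem_insert _ _) ⟨S, hS, rfl⟩, rfl⟩
  | mul x y hx hy ihx ihy =>
    rw [FreeGroup.toWord_mul] at hS
    obtain ⟨S', hS', hmk⟩ := FreeGroup.reduce.red.exists_isSuffix_mk_eq hS
    rw [← hmk]
    rcases hS'.isSuffix_or_eq_append with hS' | ⟨T, hT, rfl⟩
    · exact ihy hS'
    · rw [← FreeGroup.mul_mk, FreeGroup.mk_toWord, QuotientGroup.mk_mul_of_mem _ hy]
      exact ihx hT

theorem coe_mem_image_generatorSuffixes {A : Set (FreeGroup α)} {w g : FreeGroup α} (hw1 : w ≠ 1)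
    (hw : FreeGroup.IsCyclicallyReduced w.toWord) (hwg : IsReduced (w.toWord ++ g.toWord))
    (hfix : g⁻¹ * w * g ∈ Subgroup.closure A) :
    (g : FreeGroup α ⧸ Subgroup.closure A) ∈ (↑) '' generatorSuffixes A := by
  have hw0 : 0 < w.norm := Nat.pos_of_ne_zero (FreeGroup.norm_eq_zero.not.mpr hw1)
  have hsuffix := FreeGroup.isSuffix_toWord_conj_pow hw hwg (k := g.norm + 1) (by omega)
    ((Nat.le_succ _).trans (Nat.le_mul_of_pos_right _ hw0))
  have hmem : g⁻¹ * w ^ (g.norm + 1) * g ∈ Subgroup.closure A := by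
    have hconj := conj_pow (a := g⁻¹) (b := w) (i := g.norm + 1)
    rw [inv_inv] at hconj
    exact hconj ▸ pow_mem hfix _
  simpa only [FreeGroup.mk_toWord] using coe_mk_mem_image_generatorSuffixes hmem hsuffix

theorem schreierCore_subset_image_generatorSuffixes (A : Set (FreeGroup α)) :
    schreierCore α (FreeGroup α ⧸ Subgroup.closure A) ⊆ (↑) '' generatorSuffixes A := by
  rintro v ⟨w, hw1, hw, hwv⟩
  obtain ⟨g, rfl⟩ := QuotientGroup.mk_surjective v
  have hfix := QuotientGroup.smul_coe_eq_self_iff.mp hwv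
  rcases FreeGroup.isReduced_append_or_inv hw.isCyclicallyReduced_toWord g with h | h
  · exact coe_mem_image_generatorSuffixes hw1 hw.isCyclicallyReduced_toWord h hfix
  · refine coe_mem_image_generatorSuffixes (inv_ne_one.mpr hw1)
      hw.inv.isCyclicallyReduced_toWord h ?_
    simpa only [mul_inv_rev, inv_inv, mul_assoc] using inv_mem hfix

end FinitelyGenerated

/-- **Stallings core criterion.**  Let `N` be a subgroup of a finitely generated free
group `F(X)`.  The vertices of the Schreier graph `Γ(N\F,X)` are the cosets `F(X) ⧸ N`,
with an edge `v → x • v` for each generator `x ∈ X`, and a word `w` labels a closed path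
at `v` iff `w • v = v`.  The core of the Schreier graph (the subgraph spanned by all
vertices and edges lying on reduced closed paths) has vertex set exactly the cosets
fixed by some nontrivial cyclically reduced word; since `X` is finite, the core is a
finite graph iff its vertex set is finite.  Thus: `N` is finitely generated iff the
core of its Schreier graph is finite. -/
theorem schreier_core_criterion {X : Type*} [Fintype X] [DecidableEq X]
    (N : Subgroup (FreeGroup X)) :
    N.FG ↔
      {v : FreeGroup X ⧸ N | ∃ w : FreeGroup X,
        w ≠ 1 ∧ IsCyclicallyReduced w ∧ w • v = v}.Finite := by
  constructor
  · rintro ⟨A, rfl⟩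
    exact ((finite_generatorSuffixes A.finite_toSet).image _).subset
      (schreierCore_subset_image_generatorSuffixes _)
  · exact fg_of_finite_schreierCore
end

section
/- Let F₂ = ⟨U,V⟩ act on ℤ² linearly via Sanov matrices U = [[1,2],[0,1]], V = [[1,0],[2,1]], and let L_q = qℤ² for an integer q ≥ 2. Then the abelianization of the semidirect product L_q ⋊ F₂ is isomorphic to ℤ² ⊕ (ℤ/2ℤ)². -/
abbrev SL2 := Matrix.SpecialLinearGroup (Fin 2) ℤ

/-- The Sanov matrix `U = [[1,2],[0,1]]`. -/
def Umat : SL2 := ⟨!![1, 2; 0, 1], by norm_num [Matrix.det_fin_two_of]⟩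

/-- The Sanov matrix `V = [[1,0],[2,1]]`. -/
def Vmat : SL2 := ⟨!![1, 0; 2, 1], by norm_num [Matrix.det_fin_two_of]⟩

/-- `F₂ = ⟨U,V⟩ ≤ SL(2,ℤ)`, free of rank 2 by Sanov's theorem. -/
def Fsanov : Subgroup SL2 := Subgroup.closure {Umat, Vmat}

/-- The lattice `L_q = qℤ² ≤ ℤ²`. -/
def Lq (q : ℤ) : AddSubgroup (Fin 2 → ℤ) where
  carrier := {v | ∀ i, q ∣ v i}
  add_mem' ha hb i := dvd_add (ha i) (hb i)
  zero_mem' i := dvd_zero q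
  neg_mem' ha i := dvd_neg.mpr (ha i)

theorem mulVec_mem_Lq (q : ℤ) (A : Matrix (Fin 2) (Fin 2) ℤ) {v : Fin 2 → ℤ}
    (hv : v ∈ Lq q) : A.mulVec v ∈ Lq q := fun i => by
  have h : A.mulVec v i = A i 0 * v 0 + A i 1 * v 1 := by
    simp [Matrix.mulVec, dotProduct, Fin.sum_univ_two]
  rw [h]
  exact dvd_add ((hv 0).mul_left _) ((hv 1).mul_left _)

/-- The linear action of `A ∈ SL(2,ℤ)` restricted to the lattice `L_q`. -/
def lqEquiv (q : ℤ) (A : SL2) : (Lq q) ≃+ (Lq q) where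
  toFun v := ⟨(A : Matrix (Fin 2) (Fin 2) ℤ).mulVec v.1, mulVec_mem_Lq q _ v.2⟩
  invFun v := ⟨((A⁻¹ : SL2) : Matrix (Fin 2) (Fin 2) ℤ).mulVec v.1, mulVec_mem_Lq q _ v.2⟩
  left_inv v := Subtype.ext <| by
    have h : ((A⁻¹ : SL2) : Matrix (Fin 2) (Fin 2) ℤ) * (A : Matrix (Fin 2) (Fin 2) ℤ) = 1 := by
      rw [← Matrix.SpecialLinearGroup.coe_mul, inv_mul_cancel]; rfl
    show ((A⁻¹ : SL2) : Matrix (Fin 2) (Fin 2) ℤ).mulVec ((A : Matrix (Fin 2) (Fin 2) ℤ).mulVec v.1) = v.1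
    rw [Matrix.mulVec_mulVec, h, Matrix.one_mulVec]
  right_inv v := Subtype.ext <| by
    have h : (A : Matrix (Fin 2) (Fin 2) ℤ) * ((A⁻¹ : SL2) : Matrix (Fin 2) (Fin 2) ℤ) = 1 := by
      rw [← Matrix.SpecialLinearGroup.coe_mul, mul_inv_cancel]; rfl
    show (A : Matrix (Fin 2) (Fin 2) ℤ).mulVec (((A⁻¹ : SL2) : Matrix (Fin 2) (Fin 2) ℤ).mulVec v.1) = v.1
    rw [Matrix.mulVec_mulVec, h, Matrix.one_mulVec]
  map_add' v w := Subtype.ext <| by simp [Matrix.mulVec_add]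

/-- The action of `SL(2,ℤ)` on the (multiplicatively written) lattice `L_q`. -/
def rhoq (q : ℤ) : SL2 →* MulAut (Multiplicative (Lq q)) where
  toFun A := AddEquiv.toMultiplicative (lqEquiv q A)
  map_one' := by
    ext v : 1
    exact congrArg Multiplicative.ofAdd <| Subtype.ext <| by simp [lqEquiv]
  map_mul' A B := by
    ext v : 1
    exact congrArg Multiplicative.ofAdd <| Subtype.ext <| by
      simp [lqEquiv, Matrix.mul_apply, Fin.sum_univ_two]; ring_nf

/-- The semidirect product `L_q ⋊ F₂`. -/
abbrev LqRtimesF2 (q : ℤ) :=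
  Multiplicative (Lq q) ⋊[(rhoq q).comp Fsanov.subtype] Fsanov

/-! The abelianization of `N ⋊ G` with `N` abelian is `G^ab × N/⟨φ(g)n - n⟩`. By the ping-pong
lemma `F₂ = ⟨U, V⟩` is the free product of `⟨U⟩ ≅ ℤ` and `⟨V⟩ ≅ ℤ`, so `F₂^ab ≅ ℤ²`. Every
element of `F₂` is `≡ 1 mod 2`, so `(A - 1)L_q ⊆ 2L_q`, while `(U - 1)(q e₂) = 2q e₁` and
`(V - 1)(q e₁) = 2q e₂`; hence the coinvariants of `L_q` are `L_q / 2L_q ≅ (ℤ/2)²`. -/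

open Monoid

theorem MonoidHom.prod_ext {M N P : Type*} [MulOneClass M] [MulOneClass N] [MulOneClass P]
    {f g : M × N →* P} (hl : f.comp (inl M N) = g.comp (inl M N))
    (hr : f.comp (inr M N) = g.comp (inr M N)) : f = g :=
  MonoidHom.ext fun x => by
    rw [← Prod.fst_mul_snd x, map_mul, map_mul]
    exact congr_arg₂ (· * ·) (DFunLike.congr_fun hl x.1) (DFunLike.congr_fun hr x.2)

namespace SemidirectProduct

variable {N G : Type*} [CommGroup N] [Group G] (φ : G →* MulAut N)

def coinvariantsKer : Subgroup N :=
  Subgroup.closure (Set.range fun p : G × N => φ p.1 p.2 / p.2)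

theorem abelianization_of_inl_aut (g : G) (n : N) :
    Abelianization.of (inl (φ g n) : N ⋊[φ] G) = Abelianization.of (inl n) := by
  rw [inl_aut, map_mul, map_mul, map_inv, map_inv, mul_inv_cancel_comm]

theorem coinvariantsKer_le_ker :
    coinvariantsKer φ ≤ (Abelianization.of.comp (inl : N →* N ⋊[φ] G)).ker := by
  rw [coinvariantsKer, Subgroup.closure_le]
  rintro _ ⟨⟨g, n⟩, rfl⟩
  simp [abelianization_of_inl_aut]

theorem mk_aut_eq_mk (g : G) (n : N) :
    (QuotientGroup.mk (φ g n) : N ⧸ coinvariantsKer φ) = QuotientGroup.mk n := by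
  rw [QuotientGroup.eq_iff_div_mem]
  exact Subgroup.subset_closure ⟨(g, n), rfl⟩

def abelianizationEquiv :
    Abelianization (N ⋊[φ] G) ≃* Abelianization G × N ⧸ coinvariantsKer φ :=
  MonoidHom.toMulEquiv
    (Abelianization.lift <| lift ((MonoidHom.inr _ _).comp (QuotientGroup.mk' _))
      ((MonoidHom.inl _ _).comp Abelianization.of) fun g => by
        refine MonoidHom.ext fun n => ?_
        simp only [MonoidHom.comp_apply, MulEquiv.coe_toMonoidHom, MulAut.conj_apply,
          mul_inv_cancel_comm]
        simp [mk_aut_eq_mk])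
    ((Abelianization.map inr).coprod
      (QuotientGroup.lift _ (Abelianization.of.comp inl) (coinvariantsKer_le_ker φ)))
    (Abelianization.hom_ext _ _ <| SemidirectProduct.hom_ext (by ext; simp) (by ext; simp))
    (MonoidHom.prod_ext (Abelianization.hom_ext _ _ <| MonoidHom.ext fun g => by simp)
      (QuotientGroup.monoidHom_ext _ <| MonoidHom.ext fun n => by simp))

end SemidirectProduct

open Multiplicative in
def Abelianization.equivOfClosurePair {G : Type*} [Group G] {a b : G}
    (hab : Subgroup.closure {a, b} = ⊤) (π : G →* Multiplicative ℤ × Multiplicative ℤ)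
    (ha : π a = (ofAdd 1, 1)) (hb : π b = (1, ofAdd 1)) :
    Abelianization G ≃* Multiplicative ℤ × Multiplicative ℤ :=
  MonoidHom.toMulEquiv (lift π) ((zpowersHom _ (of a)).coprod (zpowersHom _ (of b)))
    (hom_ext _ _ <| MonoidHom.eq_of_eqOn_dense hab <| by rintro _ (rfl | rfl) <;> simp [ha, hb])
    (MonoidHom.prod_ext (MonoidHom.ext_mint <| by simp [ha]) (MonoidHom.ext_mint <| by simp [hb]))

theorem zpow_smul_eq_of_smul_eq {G α : Type*} [Group G] [MulAction G α] (g : G)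
    (f : ℤ → α → α) (zero : ∀ v, f 0 v = v) (succ : ∀ n v, f (n + 1) v = f n (g • v))
    (n : ℤ) (v : α) : g ^ n • v = f n v := by
  induction n using Int.induction_on generalizing v with
  | zero => rw [zpow_zero, one_smul, zero]
  | succ n ih => rw [zpow_add_one, mul_smul, ih, succ]
  | pred n ih =>
    have h := succ (-(n : ℤ) - 1) (g⁻¹ • v)
    rw [sub_add_cancel, smul_inv_smul] at h
    rw [zpow_sub_one, mul_smul, ih, h]

theorem abs_lt_abs_add_mul {α : Type*} [CommRing α] [LinearOrder α] [IsStrictOrderedRing α]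
    {x y c : α} (hc : 2 ≤ |c|) (h : |x| < |y|) : |y| < |x + c * y| := by
  have h1 : |c * y| ≤ |x + c * y| + |x| := by simpa using abs_sub (x + c * y) x
  rw [abs_mul] at h1
  linarith [mul_le_mul_of_nonneg_right hc (abs_nonneg y)]

theorem Umat_smul (v : Fin 2 → ℤ) : Umat • v = ![v 0 + 2 * v 1, v 1] := by
  rw [Matrix.SpecialLinearGroup.smul_def, Matrix.smul_eq_mulVec]
  ext i; fin_cases i <;> simp [Umat, Matrix.mulVec, dotProduct]

theorem Vmat_smul (v : Fin 2 → ℤ) : Vmat • v = ![v 0, 2 * v 0 + v 1] := by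
  rw [Matrix.SpecialLinearGroup.smul_def, Matrix.smul_eq_mulVec]
  ext i; fin_cases i <;> simp [Vmat, Matrix.mulVec, dotProduct]

theorem Umat_zpow_smul (n : ℤ) (v : Fin 2 → ℤ) : Umat ^ n • v = ![v 0 + 2 * n * v 1, v 1] :=
  zpow_smul_eq_of_smul_eq Umat (fun n v => ![v 0 + 2 * n * v 1, v 1])
    (fun v => by ext i; fin_cases i <;> simp)
    (fun n v => by
      simp only [Umat_smul, Matrix.cons_val_zero, Matrix.cons_val_one, Matrix.cons_val_fin_one]
      congr 1
      ring) n v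

theorem Vmat_zpow_smul (n : ℤ) (v : Fin 2 → ℤ) : Vmat ^ n • v = ![v 0, 2 * n * v 0 + v 1] :=
  zpow_smul_eq_of_smul_eq Vmat (fun n v => ![v 0, 2 * n * v 0 + v 1])
    (fun v => by ext i; fin_cases i <;> simp)
    (fun n v => by
      simp only [Vmat_smul, Matrix.cons_val_zero, Matrix.cons_val_one, Matrix.cons_val_fin_one]
      congr 2
      ring) n v

theorem Umat_mem_Fsanov : Umat ∈ Fsanov := Subgroup.subset_closure (by simp)

theorem Vmat_mem_Fsanov : Vmat ∈ Fsanov := Subgroup.subset_closure (by simp)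

def sanovLift : CoprodI (fun _ : Bool => Multiplicative ℤ) →* SL2 :=
  CoprodI.lift fun b => zpowersHom SL2 (bif b then Umat else Vmat)

theorem sanovLift_injective : Function.Injective sanovLift := by
  let X : Bool → Set (Fin 2 → ℤ) := fun b =>
    bif b then {v | |v 1| < |v 0|} else {v | |v 0| < |v 1|}
  refine CoprodI.lift_injective_of_ping_pong _ (Or.inr ⟨true, by simp⟩) X ?_ ?_ ?_
  · rintro (_ | _)
    exacts [⟨![0, 1], by simp [X]⟩, ⟨![1, 0], by simp [X]⟩]
  · rintro (_ | _) (_ | _) hne <;> simp only [ne_eq, not_true_eq_false] at hne <;>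
      exact Set.disjoint_left.2 fun _ h h' => by
        simp only [X, cond_true, cond_false, Set.mem_ofPred_eq] at h h'; exact lt_asymm h h'
  · intro i j hij x hx
    have hx0 : Multiplicative.toAdd x ≠ 0 := hx
    have hc : 2 ≤ |2 * Multiplicative.toAdd x| := by
      rw [abs_mul, abs_two]; linarith [Int.one_le_abs hx0]
    rintro _ ⟨v, hv, rfl⟩
    cases i <;> cases j <;> simp only [ne_eq, not_true_eq_false] at hij <;>
      simp only [X, zpowersHom_apply, cond_true, cond_false] at hv ⊢
    · rw [Vmat_zpow_smul]; simpa [add_comm] using abs_lt_abs_add_mul hc hv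
    · rw [Umat_zpow_smul]; simpa using abs_lt_abs_add_mul hc hv

theorem range_sanovLift : sanovLift.range = Fsanov := by
  apply le_antisymm
  · rw [sanovLift, CoprodI.range_eq_iSup]
    refine iSup_le fun b => ?_
    rintro _ ⟨n, rfl⟩
    cases b
    exacts [Subgroup.zpow_mem _ Vmat_mem_Fsanov _, Subgroup.zpow_mem _ Umat_mem_Fsanov _]
  · rw [Fsanov, Subgroup.closure_le]
    rintro _ (rfl | rfl)
    exacts [⟨CoprodI.of (i := true) (Multiplicative.ofAdd 1), by simp [sanovLift]⟩,
      ⟨CoprodI.of (i := false) (Multiplicative.ofAdd 1), by simp [sanovLift]⟩]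

noncomputable def sanovEquiv : CoprodI (fun _ : Bool => Multiplicative ℤ) ≃* Fsanov :=
  (MonoidHom.ofInjective sanovLift_injective).trans (MulEquiv.subgroupCongr range_sanovLift)

theorem sanovEquiv_symm_Umat :
    sanovEquiv.symm ⟨Umat, Umat_mem_Fsanov⟩ = CoprodI.of (i := true) (Multiplicative.ofAdd 1) := by
  rw [MulEquiv.symm_apply_eq]
  apply Subtype.ext
  rw [sanovEquiv, MulEquiv.trans_apply, MulEquiv.subgroupCongr_apply, MonoidHom.ofInjective_apply]
  simp [sanovLift]

theorem sanovEquiv_symm_Vmat :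
    sanovEquiv.symm ⟨Vmat, Vmat_mem_Fsanov⟩ = CoprodI.of (i := false) (Multiplicative.ofAdd 1) := by
  rw [MulEquiv.symm_apply_eq]
  apply Subtype.ext
  rw [sanovEquiv, MulEquiv.trans_apply, MulEquiv.subgroupCongr_apply, MonoidHom.ofInjective_apply]
  simp [sanovLift]

theorem closure_Umat_Vmat_eq_top :
    Subgroup.closure {⟨Umat, Umat_mem_Fsanov⟩, ⟨Vmat, Vmat_mem_Fsanov⟩} =
      (⊤ : Subgroup Fsanov) := by
  have h : ((↑) : Fsanov → SL2) ⁻¹' {Umat, Vmat} =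
      {⟨Umat, Umat_mem_Fsanov⟩, ⟨Vmat, Vmat_mem_Fsanov⟩} := by
    ext ⟨A, hA⟩
    simp
  rw [← h]
  exact Subgroup.closure_closure_coe_preimage

noncomputable def exponentSum : Fsanov →* Multiplicative ℤ × Multiplicative ℤ :=
  (CoprodI.lift fun b => bif b then MonoidHom.inl _ _ else MonoidHom.inr _ _).comp
    sanovEquiv.symm.toMonoidHom

noncomputable def abelianizationFsanovEquiv :
    Abelianization Fsanov ≃* Multiplicative ℤ × Multiplicative ℤ :=
  Abelianization.equivOfClosurePair closure_Umat_Vmat_eq_top exponentSum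
    (by simp [exponentSum, sanovEquiv_symm_Umat]) (by simp [exponentSum, sanovEquiv_symm_Vmat])

theorem Fsanov_le_Gamma_two : Fsanov ≤ CongruenceSubgroup.Gamma 2 := by
  rw [Fsanov, Subgroup.closure_le]
  rintro _ (rfl | rfl) <;> rw [SetLike.mem_coe, CongruenceSubgroup.Gamma_mem] <;> decide

namespace Lq

variable {q : ℤ}

def mk (q : ℤ) : (Fin 2 → ℤ) →+ Lq q :=
  (DistribSMul.toAddMonoidHom (Fin 2 → ℤ) q).codRestrict (Lq q)
    fun w i => dvd_mul_right q (w i)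

@[simp]
theorem coe_mk (w : Fin 2 → ℤ) : (mk q w : Fin 2 → ℤ) = q • w := rfl

theorem mk_surjective : Function.Surjective (mk q) :=
  fun v => ⟨fun i => v.1 i / q, Subtype.ext <| funext fun i => Int.mul_ediv_cancel' (v.2 i)⟩

theorem lqEquiv_mk (A : SL2) (w : Fin 2 → ℤ) : lqEquiv q A (mk q w) = mk q (A • w) :=
  Subtype.ext (Matrix.mulVec_smul _ q w)

def parity (q : ℤ) : Lq q →+ ZMod 2 × ZMod 2 where
  toFun v := ((v.1 0 / q : ℤ), (v.1 1 / q : ℤ))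
  map_zero' := by simp
  map_add' v w := by simp [Int.add_ediv_of_dvd_right (w.2 _)]

theorem parity_mk (hq : q ≠ 0) (w : Fin 2 → ℤ) :
    parity q (mk q w) = ((w 0 : ZMod 2), (w 1 : ZMod 2)) := by
  simp [parity, hq]

theorem parity_surjective (hq : q ≠ 0) : Function.Surjective (parity q) := by
  rintro ⟨a, b⟩
  obtain ⟨x, rfl⟩ := ZMod.intCast_surjective a
  obtain ⟨y, rfl⟩ := ZMod.intCast_surjective b
  exact ⟨mk q ![x, y], by simp [parity_mk hq]⟩

theorem parity_lqEquiv (hq : q ≠ 0) {A : SL2} (hA : A ∈ CongruenceSubgroup.Gamma 2) (v : Lq q) :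
    parity q (lqEquiv q A v) = parity q v := by
  obtain ⟨h00, h01, h10, h11⟩ := CongruenceSubgroup.Gamma_mem.1 hA
  obtain ⟨w, rfl⟩ := mk_surjective v
  rw [lqEquiv_mk, parity_mk hq, parity_mk hq]
  simp [Matrix.SpecialLinearGroup.smul_def, Matrix.smul_eq_mulVec, Matrix.mulVec, dotProduct,
    h00, h01, h10, h11]

end Lq

open SemidirectProduct

theorem ofAdd_mk_smul_sub_mem {q : ℤ} {A : SL2} (hA : A ∈ Fsanov) (u : Fin 2 → ℤ) :
    Multiplicative.ofAdd (Lq.mk q (A • u - u)) ∈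
      coinvariantsKer ((rhoq q).comp Fsanov.subtype) := by
  rw [map_sub, ← Lq.lqEquiv_mk, ofAdd_sub]
  exact Subgroup.subset_closure ⟨(⟨A, hA⟩, Multiplicative.ofAdd (Lq.mk q u)), rfl⟩

theorem coinvariantsKer_rhoq_le_ker_parity {q : ℤ} (hq : q ≠ 0) :
    coinvariantsKer ((rhoq q).comp Fsanov.subtype) ≤
      (AddMonoidHom.toMultiplicative (Lq.parity q)).ker := by
  rw [coinvariantsKer, Subgroup.closure_le]
  rintro _ ⟨⟨g, n⟩, rfl⟩
  rw [SetLike.mem_coe, MonoidHom.mem_ker, map_div, div_eq_one]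
  exact congrArg Multiplicative.ofAdd (Lq.parity_lqEquiv hq (Fsanov_le_Gamma_two g.2) _)

theorem ker_parity_le_coinvariantsKer_rhoq {q : ℤ} (hq : q ≠ 0) :
    (AddMonoidHom.toMultiplicative (Lq.parity q)).ker ≤
      coinvariantsKer ((rhoq q).comp Fsanov.subtype) := by
  intro n hn
  obtain ⟨w, hnw⟩ := Lq.mk_surjective (Multiplicative.toAdd n)
  rw [← ofAdd_toAdd n, ← hnw] at hn ⊢
  have hpar : Lq.parity q (Lq.mk q w) = 0 := congrArg Multiplicative.toAdd hn
  rw [Lq.parity_mk hq, Prod.mk_eq_zero, ZMod.intCast_zmod_eq_zero_iff_dvd,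
    ZMod.intCast_zmod_eq_zero_iff_dvd] at hpar
  obtain ⟨⟨a, ha⟩, ⟨b, hb⟩⟩ := hpar
  have hU : Umat • ![0, 1] - ![0, 1] = (![2, 0] : Fin 2 → ℤ) := by
    ext i; fin_cases i <;> simp [Umat_smul]
  have hV : Vmat • ![1, 0] - ![1, 0] = (![0, 2] : Fin 2 → ℤ) := by
    ext i; fin_cases i <;> simp [Vmat_smul]
  have hw : w = a • (Umat • ![0, 1] - ![0, 1]) + b • (Vmat • ![1, 0] - ![1, 0]) := by
    rw [hU, hV]
    ext i; fin_cases i <;> simp [ha, hb, mul_comm]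
  rw [hw, map_add, map_zsmul, map_zsmul, ofAdd_add, ofAdd_zsmul, ofAdd_zsmul]
  exact mul_mem (zpow_mem (ofAdd_mk_smul_sub_mem Umat_mem_Fsanov _) _)
    (zpow_mem (ofAdd_mk_smul_sub_mem Vmat_mem_Fsanov _) _)

noncomputable def coinvariantsRhoqEquiv {q : ℤ} (hq : q ≠ 0) :
    Multiplicative (Lq q) ⧸ coinvariantsKer ((rhoq q).comp Fsanov.subtype) ≃*
      Multiplicative (ZMod 2 × ZMod 2) :=
  (QuotientGroup.quotientMulEquivOfEq <| le_antisymm (coinvariantsKer_rhoq_le_ker_parity hq)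
      (ker_parity_le_coinvariantsKer_rhoq hq)).trans
    (QuotientGroup.quotientKerEquivOfSurjective _ (Lq.parity_surjective hq))

/-- For every integer `q ≥ 2`, the abelianization of `L_q ⋊ F₂`
is isomorphic to `ℤ² ⊕ (ℤ/2ℤ)²`. -/
theorem abelianization_LqRtimesF2 (q : ℤ) (hq : 2 ≤ q) :
    Nonempty (Abelianization (LqRtimesF2 q) ≃*
      Multiplicative ((ℤ × ℤ) × (ZMod 2 × ZMod 2))) := by
  have hq0 : q ≠ 0 := by omega
  exact ⟨(abelianizationEquiv ((rhoq q).comp Fsanov.subtype)).trans <|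
    (MulEquiv.prodCongr (abelianizationFsanovEquiv.trans (MulEquiv.prodMultiplicative ℤ ℤ).symm)
      (coinvariantsRhoqEquiv (q := q) hq0)).trans (MulEquiv.prodMultiplicative _ _).symm⟩
end

section
/- For each integer q ≥ 2, the subgroup H_q = ⟨qℤ², (0,U), (0,V)⟩ of ℤ² ⋊ SL(2,ℤ) (with U, V the Sanov matrices) has rank exactly 4. -/
/-- The standard linear action of `SL(2,ℤ)` on `ℤ²` (written multiplicatively). -/
def rho : SL2 →* MulAut (Multiplicative (Fin 2 → ℤ)) where
  toFun A := AddEquiv.toMultiplicative (Matrix.SpecialLinearGroup.toLin' A).toAddEquiv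
  map_one' := by ext v; simp
  map_mul' A B := by ext v; simp

/-- The semidirect product `ℤ² ⋊ SL(2,ℤ)` with the standard linear action. -/
abbrev Z2RtimesSL2 := Multiplicative (Fin 2 → ℤ) ⋊[rho] SL2

/-- The subgroup `H_q = ⟨qℤ², (0,U), (0,V)⟩` of `ℤ² ⋊ SL(2,ℤ)`. -/
def Hq (q : ℤ) : Subgroup Z2RtimesSL2 :=
  Subgroup.closure
    ((SemidirectProduct.inl ''
        {v : Multiplicative (Fin 2 → ℤ) | ∀ i, q ∣ Multiplicative.toAdd v i}) ∪
      {SemidirectProduct.inr Umat, SemidirectProduct.inr Vmat})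

/-!
The elements `qe₁, qe₂, (0,U), (0,V)` generate `H_q`, so the rank is at most 4. For the lower
bound, every element of `H_q` has the form `(q a, 1 + 2 X)` with `a` and `X` integral, and
`(q a, 1 + 2 X) ↦ (a mod 2, X mod 2)` is a homomorphism to an `𝔽₂`-vector space: it is additive
because `(1 + 2 X)(1 + 2 Y) = 1 + 2 (X + Y + 2 X Y)` and `1 + 2 X` acts trivially on
`qℤ² / 2qℤ²`. The four generators have linearly independent images, so no generating set of
`H_q` can have fewer than four elements.
-/

open CongruenceSubgroup
open scoped Matrix

theorem card_le_card_of_closure_eq_top {G K V ι : Type*} [Group G] [DivisionRing K]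
    [AddCommGroup V] [Module K V] [Fintype ι] (f : G →* Multiplicative V) {g : ι → G}
    (hg : LinearIndependent K fun i => (f (g i)).toAdd) {S : Finset G}
    (hS : Subgroup.closure (S : Set G) = ⊤) : Fintype.card ι ≤ S.card := by
  classical
  set T := S.image fun s => (f s).toAdd
  have hfT : ∀ x, (f x).toAdd ∈ Submodule.span K (T : Set V) := by
    suffices ⊤ ≤ (Submodule.span K (T : Set V)).toAddSubgroup.toSubgroup.comap f from
      fun x => this (Subgroup.mem_top x)
    rw [← hS, Subgroup.closure_le]
    intro s hs
    exact Submodule.subset_span (Finset.mem_image_of_mem _ hs)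
  calc Fintype.card ι
      = Module.finrank K (Submodule.span K (Set.range fun i => (f (g i)).toAdd)) :=
        (finrank_span_eq_card hg).symm
    _ ≤ Module.finrank K (Submodule.span K (T : Set V)) :=
        Submodule.finrank_mono (Submodule.span_le.2 (Set.range_subset_iff.2 fun i => hfT (g i)))
    _ ≤ T.card := finrank_span_finset_le_card T
    _ ≤ S.card := Finset.card_image_le

theorem card_le_card_of_closure_eq {G K V ι : Type*} [Group G] [DivisionRing K]
    [AddCommGroup V] [Module K V] [Fintype ι] {H : Subgroup G} (f : H →* Multiplicative V)
    {g : ι → H} (hg : LinearIndependent K fun i => (f (g i)).toAdd) {S : Finset G}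
    (hS : Subgroup.closure (S : Set G) = H) : Fintype.card ι ≤ S.card := by
  classical
  subst hS
  calc Fintype.card ι ≤ (S.preimage Subtype.val Subtype.val_injective.injOn).card :=
        card_le_card_of_closure_eq_top f hg (by simp)
    _ ≤ S.card := (Finset.card_preimage ..).trans_le (Finset.card_filter_le _ _)

theorem linearIndependent_pi_single_prod_offDiag_single (R : Type*) [Ring R] :
    LinearIndependent R ![((Pi.single 0 1 : Fin 2 → R), (0 : Matrix (Fin 2) (Fin 2) R)),
      (Pi.single 1 1, 0), (0, Matrix.single 0 1 1), (0, Matrix.single 1 0 1)] := by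
  rw [Fintype.linearIndependent_iff]
  intro c hc i
  fin_cases i
  · simpa [Fin.sum_univ_four] using congrArg (fun p => p.1 0) hc
  · simpa [Fin.sum_univ_four] using congrArg (fun p => p.1 1) hc
  · simpa [Fin.sum_univ_four] using congrArg (fun p => p.2 0 1) hc
  · simpa [Fin.sum_univ_four] using congrArg (fun p => p.2 1 0) hc

theorem mem_Gamma_iff_exists_eq_one_add_smul {N : ℕ} {A : SL2} :
    A ∈ Gamma N ↔
      ∃ X : Matrix (Fin 2) (Fin 2) ℤ, (A : Matrix (Fin 2) (Fin 2) ℤ) = 1 + (N : ℤ) • X := by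
  have hker : A ∈ Gamma N ↔
      (Int.castRingHom (ZMod N)).mapMatrix ((A : Matrix (Fin 2) (Fin 2) ℤ) - 1) = 0 := by
    rw [Gamma_mem', map_sub, map_one, sub_eq_zero, ← Matrix.SpecialLinearGroup.map_apply_coe,
      ← Matrix.SpecialLinearGroup.coe_one]
    exact Subtype.ext_iff
  rw [hker]
  constructor
  · intro h
    have hdvd (i j : Fin 2) : (N : ℤ) ∣ ((A : Matrix (Fin 2) (Fin 2) ℤ) - 1) i j :=
      (ZMod.intCast_zmod_eq_zero_iff_dvd _ _).1 (congrFun (congrFun h i) j)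
    choose X hX using hdvd
    exact ⟨Matrix.of X, by ext i j; simp [← hX]⟩
  · rintro ⟨X, hX⟩
    rw [hX, add_sub_cancel_left, map_zsmul, ← Int.cast_smul_eq_zsmul (ZMod N), Int.cast_natCast,
      ZMod.natCast_self, zero_smul]

-- The division is exact for `A ∈ Γ(N)`; outside `Γ(N)` the value is meaningless.
def gammaResidue (N : ℕ) (A : SL2) : Matrix (Fin 2) (Fin 2) (ZMod N) :=
  Matrix.of fun i j => (((A - 1 : Matrix (Fin 2) (Fin 2) ℤ) i j / N : ℤ) : ZMod N)

theorem gammaResidue_of_eq_one_add_smul {N : ℕ} [NeZero N] {A : SL2}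
    {X : Matrix (Fin 2) (Fin 2) ℤ} (hA : (A : Matrix (Fin 2) (Fin 2) ℤ) = 1 + (N : ℤ) • X) :
    gammaResidue N A = X.map (↑) := by
  ext i j
  rw [gammaResidue, Matrix.of_apply, hA, add_sub_cancel_left, Matrix.smul_apply, smul_eq_mul,
    Int.mul_ediv_cancel_left _ (Int.natCast_ne_zero.2 (NeZero.ne N)), Matrix.map_apply]

theorem gammaResidue_one (N : ℕ) : gammaResidue N 1 = 0 := by
  ext i j
  simp [gammaResidue]

theorem gammaResidue_mul {N : ℕ} [NeZero N] {A B : SL2} (hA : A ∈ Gamma N) (hB : B ∈ Gamma N) :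
    gammaResidue N (A * B) = gammaResidue N A + gammaResidue N B := by
  obtain ⟨X, hX⟩ := mem_Gamma_iff_exists_eq_one_add_smul.1 hA
  obtain ⟨Y, hY⟩ := mem_Gamma_iff_exists_eq_one_add_smul.1 hB
  have hXY : ((A * B : SL2) : Matrix (Fin 2) (Fin 2) ℤ) =
      1 + (N : ℤ) • (X + Y + (N : ℤ) • (X * Y)) := by
    rw [Matrix.SpecialLinearGroup.coe_mul, hX, hY]
    noncomm_ring
    simp only [smul_add]
    abel
  rw [gammaResidue_of_eq_one_add_smul hXY, gammaResidue_of_eq_one_add_smul hX,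
    gammaResidue_of_eq_one_add_smul hY]
  ext i j
  simp only [Matrix.map_apply, Matrix.add_apply, Matrix.smul_apply, smul_eq_mul, Int.cast_add,
    Int.cast_mul, Int.cast_natCast, ZMod.natCast_self, zero_mul, add_zero]

theorem toAdd_rho_apply (A : SL2) (w : Multiplicative (Fin 2 → ℤ)) :
    (rho A w).toAdd = (A : Matrix (Fin 2) (Fin 2) ℤ) *ᵥ w.toAdd :=
  rfl

def levelSubgroup (q : ℤ) (N : ℕ) : Subgroup Z2RtimesSL2 where
  carrier := {x | (∃ a : Fin 2 → ℤ, x.left.toAdd = q • a) ∧ x.right ∈ Gamma N}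
  one_mem' := ⟨⟨0, by simp⟩, one_mem _⟩
  mul_mem' := by
    rintro x y ⟨⟨a, ha⟩, hx⟩ ⟨⟨b, hb⟩, hy⟩
    refine ⟨⟨a + (x.right : Matrix (Fin 2) (Fin 2) ℤ) *ᵥ b, ?_⟩, mul_mem hx hy⟩
    rw [SemidirectProduct.mul_left, toAdd_mul, toAdd_rho_apply, ha, hb, Matrix.mulVec_smul,
      smul_add]
  inv_mem' := by
    rintro x ⟨⟨a, ha⟩, hx⟩
    refine ⟨⟨-(((x.right⁻¹ : SL2) : Matrix (Fin 2) (Fin 2) ℤ) *ᵥ a), ?_⟩, inv_mem hx⟩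
    rw [SemidirectProduct.inv_left, toAdd_rho_apply, toAdd_inv, ha, Matrix.mulVec_neg,
      Matrix.mulVec_smul, smul_neg]

-- The division is exact on `levelSubgroup q N`; elsewhere the value is meaningless.
def translResidue (q : ℤ) (N : ℕ) (x : Z2RtimesSL2) : Fin 2 → ZMod N :=
  fun i => ((x.left.toAdd i / q : ℤ) : ZMod N)

theorem translResidue_of_eq_smul {q : ℤ} (hq : q ≠ 0) (N : ℕ) {x : Z2RtimesSL2}
    {a : Fin 2 → ℤ} (ha : x.left.toAdd = q • a) : translResidue q N x = fun i => (a i : ZMod N) := by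
  ext i
  rw [translResidue, ha, Pi.smul_apply, smul_eq_mul, Int.mul_ediv_cancel_left _ hq]

theorem translResidue_mul {q : ℤ} (hq : q ≠ 0) {N : ℕ} {x y : Z2RtimesSL2}
    (hx : x ∈ levelSubgroup q N) (hy : y ∈ levelSubgroup q N) :
    translResidue q N (x * y) = translResidue q N x + translResidue q N y := by
  obtain ⟨⟨a, ha⟩, hA⟩ := hx
  obtain ⟨⟨b, hb⟩, -⟩ := hy
  obtain ⟨X, hX⟩ := mem_Gamma_iff_exists_eq_one_add_smul.1 hA
  have hxy : (x * y).left.toAdd = q • (a + b + (N : ℤ) • (X *ᵥ b)) := by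
    rw [SemidirectProduct.mul_left, toAdd_mul, toAdd_rho_apply, ha, hb, hX, Matrix.add_mulVec,
      Matrix.one_mulVec, Matrix.smul_mulVec, Matrix.mulVec_smul, smul_comm (N : ℤ) q, smul_add,
      smul_add, add_assoc]
  rw [translResidue_of_eq_smul hq N hxy, translResidue_of_eq_smul hq N ha,
    translResidue_of_eq_smul hq N hb]
  ext i
  simp only [Pi.add_apply, Pi.smul_apply, smul_eq_mul, Int.cast_add, Int.cast_mul,
    Int.cast_natCast, ZMod.natCast_self, zero_mul, add_zero]

theorem translResidue_inr (q : ℤ) (N : ℕ) (A : SL2) :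
    translResidue q N (SemidirectProduct.inr A) = 0 := by
  ext i
  simp [translResidue]

def levelSubgroup.residueHom {q : ℤ} (hq : q ≠ 0) (N : ℕ) [NeZero N] :
    levelSubgroup q N →* Multiplicative ((Fin 2 → ZMod N) × Matrix (Fin 2) (Fin 2) (ZMod N)) :=
  MonoidHom.mk' (fun x => .ofAdd (translResidue q N x, gammaResidue N (x : Z2RtimesSL2).right))
    fun x y => by
      simp only [Subgroup.coe_mul, translResidue_mul hq x.2 y.2, SemidirectProduct.mul_right,
        gammaResidue_mul x.2.2 y.2.2]
      rfl

def translation (q : ℤ) (i : Fin 2) : Z2RtimesSL2 :=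
  SemidirectProduct.inl (.ofAdd (Pi.single i q))

theorem right_translation (q : ℤ) (i : Fin 2) : (translation q i).right = 1 :=
  rfl

theorem translResidue_translation {q : ℤ} (hq : q ≠ 0) (N : ℕ) (i : Fin 2) :
    translResidue q N (translation q i) = Pi.single i 1 := by
  have hsmul : (translation q i).left.toAdd = q • Pi.single i 1 := by
    rw [translation, SemidirectProduct.left_inl, toAdd_ofAdd, ← Pi.single_smul', smul_eq_mul,
      mul_one]
  rw [translResidue_of_eq_smul hq N hsmul]
  ext j
  by_cases h : j = i <;> simp [h]

theorem coe_Umat : (Umat : Matrix (Fin 2) (Fin 2) ℤ) = 1 + (2 : ℤ) • Matrix.single 0 1 1 := by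
  ext i j
  fin_cases i <;> fin_cases j <;> rfl

theorem coe_Vmat : (Vmat : Matrix (Fin 2) (Fin 2) ℤ) = 1 + (2 : ℤ) • Matrix.single 1 0 1 := by
  ext i j
  fin_cases i <;> fin_cases j <;> rfl

theorem gammaResidue_Umat : gammaResidue 2 Umat = Matrix.single 0 1 1 := by
  rw [gammaResidue_of_eq_one_add_smul coe_Umat]
  exact Matrix.map_single _ _ _ (Int.castRingHom (ZMod 2))

theorem gammaResidue_Vmat : gammaResidue 2 Vmat = Matrix.single 1 0 1 := by
  rw [gammaResidue_of_eq_one_add_smul coe_Vmat]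
  exact Matrix.map_single _ _ _ (Int.castRingHom (ZMod 2))

theorem translation_mem_Hq (q : ℤ) (i : Fin 2) : translation q i ∈ Hq q :=
  Subgroup.subset_closure (Or.inl ⟨_, fun j => by by_cases h : j = i <;> simp [h], rfl⟩)

theorem inr_Umat_mem_Hq (q : ℤ) : SemidirectProduct.inr Umat ∈ Hq q :=
  Subgroup.subset_closure (Or.inr (Or.inl rfl))

theorem inr_Vmat_mem_Hq (q : ℤ) : SemidirectProduct.inr Vmat ∈ Hq q :=
  Subgroup.subset_closure (Or.inr (Or.inr rfl))

theorem Hq_le_levelSubgroup (q : ℤ) : Hq q ≤ levelSubgroup q 2 := by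
  rw [Hq, Subgroup.closure_le]
  rintro x (⟨v, hv, rfl⟩ | rfl | rfl)
  · choose a ha using hv
    exact ⟨⟨a, funext ha⟩, one_mem _⟩
  · exact ⟨⟨0, by simp⟩, mem_Gamma_iff_exists_eq_one_add_smul.2 ⟨_, coe_Umat⟩⟩
  · exact ⟨⟨0, by simp⟩, mem_Gamma_iff_exists_eq_one_add_smul.2 ⟨_, coe_Vmat⟩⟩

theorem closure_translation_Umat_Vmat (q : ℤ) :
    Subgroup.closure {translation q 0, translation q 1, SemidirectProduct.inr Umat,
      SemidirectProduct.inr Vmat} = Hq q := by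
  refine le_antisymm ?_ ?_
  · rw [Subgroup.closure_le]
    rintro x (rfl | rfl | rfl | rfl)
    exacts [translation_mem_Hq q 0, translation_mem_Hq q 1, inr_Umat_mem_Hq q, inr_Vmat_mem_Hq q]
  · rw [Hq, Subgroup.closure_le]
    rintro x (⟨v, hv, rfl⟩ | rfl | rfl)
    · obtain ⟨a, ha⟩ := hv 0
      obtain ⟨b, hb⟩ := hv 1
      have hv : SemidirectProduct.inl v = translation q 0 ^ a * translation q 1 ^ b := by
        simp only [translation, ← map_zpow, ← map_mul]
        congr 1
        ext i
        fin_cases i <;> simp [ha, hb, mul_comm]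
      rw [hv]
      exact mul_mem (zpow_mem (Subgroup.subset_closure (by simp)) a)
        (zpow_mem (Subgroup.subset_closure (by simp)) b)
    all_goals exact Subgroup.subset_closure (by simp)

theorem four_le_card_of_closure_eq_Hq {q : ℤ} (hq : q ≠ 0) {S : Finset Z2RtimesSL2}
    (hS : Subgroup.closure (S : Set Z2RtimesSL2) = Hq q) : 4 ≤ S.card := by
  let g : Fin 4 → Hq q := ![⟨_, translation_mem_Hq q 0⟩, ⟨_, translation_mem_Hq q 1⟩,
    ⟨_, inr_Umat_mem_Hq q⟩, ⟨_, inr_Vmat_mem_Hq q⟩]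
  let f := (levelSubgroup.residueHom hq 2).comp (Subgroup.inclusion (Hq_le_levelSubgroup q))
  have hfg : (fun i => (f (g i)).toAdd) = ![((Pi.single 0 1 : Fin 2 → ZMod 2),
      (0 : Matrix (Fin 2) (Fin 2) (ZMod 2))), (Pi.single 1 1, 0), (0, Matrix.single 0 1 1),
      (0, Matrix.single 1 0 1)] := by
    ext i : 1
    fin_cases i <;>
      simp [f, g, levelSubgroup.residueHom, translResidue_translation hq, translResidue_inr,
        right_translation, gammaResidue_one, gammaResidue_Umat, gammaResidue_Vmat]
  have hli : LinearIndependent (ZMod 2) fun i => (f (g i)).toAdd := by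
    rw [hfg]
    exact linearIndependent_pi_single_prod_offDiag_single (ZMod 2)
  simpa using card_le_card_of_closure_eq f hli hS

/-- For every integer `q ≥ 2`, the subgroup `H_q = ⟨qℤ², (0,U), (0,V)⟩` of
`ℤ² ⋊ SL(2,ℤ)` has rank exactly `4`: it has a generating set of `4` elements and
no generating set of fewer than `4` elements. -/
theorem rank_Hq (q : ℤ) (hq : 2 ≤ q) :
    (∃ S : Finset Z2RtimesSL2, S.card = 4 ∧ Subgroup.closure (S : Set Z2RtimesSL2) = Hq q) ∧
      (∀ S : Finset Z2RtimesSL2, Subgroup.closure (S : Set Z2RtimesSL2) = Hq q →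
        4 ≤ S.card) := by
  classical
  have hq0 : q ≠ 0 := by omega
  let S : Finset Z2RtimesSL2 := {translation q 0, translation q 1, SemidirectProduct.inr Umat,
    SemidirectProduct.inr Vmat}
  have hS : Subgroup.closure (S : Set Z2RtimesSL2) = Hq q := by
    simp only [S, Finset.coe_insert, Finset.coe_singleton]
    exact closure_translation_Umat_Vmat q
  exact ⟨⟨S, le_antisymm Finset.card_le_four (four_le_card_of_closure_eq_Hq hq0 hS), hS⟩,
    fun S hS => four_le_card_of_closure_eq_Hq hq0 hS⟩
end
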